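/- arXiv:1411.6862 — 3 statements merged into one kernel-verified Lean document; each statement's English description precedes it below -/
import Mathlib

section
/- Let l be an odd prime, let q ≥ 2 be an integer not divisible by l, and suppose that the multiplicative order e of −q modulo l is odd. Then for every partition λ of n, the l-adic valuation of the rational number P_λ(q²) equals the l-adic valuation of the rational number P_λ(−q). (That is, the unipotent character degrees P_λ(q²) of GL_n(q²) and |P_λ(−q)| of U_n(q) have the same l-part.) -/
/-- `f` encodes a partition `λ` via its parts `λ_i = f i` for `i ≥ 1` (and `f 0 = 0`):
the parts are weakly decreasing and eventually zero. -/
def IsPartition (f : ℕ → ℕ) : Prop :=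
  f 0 = 0 ∧ (∀ i, 1 ≤ i → f (i + 1) ≤ f i) ∧ ∃ N, ∀ i, N ≤ i → f i = 0

/-- The conjugate partition: `conjP f j = #{i ≥ 1 | f i ≥ j}`. -/
noncomputable def conjP (f : ℕ → ℕ) (j : ℕ) : ℕ :=
  Set.ncard {i : ℕ | 1 ≤ i ∧ j ≤ f i}

/-- The size `|λ| = Σ_i λ_i` of the partition. -/
noncomputable def wtP (f : ℕ → ℕ) : ℕ := ∑ᶠ i, f i

/-- `d_λ = Σ_i (λ'_i)² − Σ_i i·λ_i`. -/
noncomputable def dP (f : ℕ → ℕ) : ℤ :=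
  (∑ᶠ i : ℕ, (conjP f i : ℤ) ^ 2) - ∑ᶠ i : ℕ, (i : ℤ) * (f i : ℤ)

/-- The multiset of hook lengths of the partition: for each cell `(i,j)` of the Young
diagram (`1 ≤ i`, `1 ≤ j ≤ λ_i`) the hook length `λ_i − j + λ'_j − i + 1`. -/
noncomputable def hooksP (f : ℕ → ℕ) : Multiset ℤ :=
  (((Finset.Icc 1 (conjP f 1)) ×ˢ (Finset.Icc 1 (f 1))).filter
      (fun p => p.2 ≤ f p.1)).val.map
    (fun p => (f p.1 : ℤ) - (p.2 : ℤ) + (conjP f p.2 : ℤ) - (p.1 : ℤ) + 1)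

/-- `P_λ(x) = x^{d_λ} · ∏_{i=1}^{|λ|} (x^i − 1) / ∏_{h ∈ hooks(λ)} (x^h − 1)`. -/
noncomputable def PP (f : ℕ → ℕ) (x : ℚ) : ℚ :=
  x ^ dP f * (∏ i ∈ Finset.Icc 1 (wtP f), (x ^ i - 1)) /
    ((hooksP f).map (fun h => x ^ h - 1)).prod

/-!
Since `(x ^ 2) ^ h - 1 = (x ^ h - 1)(x ^ h + 1)`, the quotient `P_λ(x²) / P_λ(x)` is
`x ^ d_λ · ∏_{i ≤ n} (x ^ i + 1) / ∏_{h ∈ hooks(λ)} (x ^ h + 1)`. For `x = -q` this is an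
`l`-adic unit: `l ∣ (-q) ^ k + 1` would give `(-q) ^ k = -1` in `ZMod l`, impossible for odd `l`
when `-q` has odd order there.
-/

theorem pow_ne_neg_one_of_odd_orderOf {M : Type*} [Monoid M] [HasDistribNeg M] {a : M}
    (ha : Odd (orderOf a)) (hM : (-1 : M) ≠ 1) (k : ℕ) : a ^ k ≠ -1 := by
  intro hk
  have hdvd : orderOf a ∣ 2 * k :=
    orderOf_dvd_of_pow_eq_one (by rw [pow_mul', hk, neg_one_sq])
  have hk1 : a ^ k = 1 := orderOf_dvd_iff_pow_eq_one.mp <|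
    (Nat.coprime_two_right.mpr ha).dvd_of_dvd_mul_left hdvd
  exact hM (hk ▸ hk1)

theorem Int.not_dvd_pow_add_one_of_odd_orderOf {l : ℕ} {a : ℤ}
    (ha : Odd (orderOf (a : ZMod l))) (hl : (-1 : ZMod l) ≠ 1) (k : ℕ) :
    ¬ (l : ℤ) ∣ a ^ k + 1 := by
  rw [← ZMod.intCast_zmod_eq_zero_iff_dvd, Int.cast_add, Int.cast_pow, Int.cast_one,
    add_eq_zero_iff_eq_neg]
  exact pow_ne_neg_one_of_odd_orderOf ha hl k

section padicUnitSubmonoid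

variable {p : ℕ} [Fact p.Prime]

variable (p) in
def padicUnitSubmonoid : Submonoid ℚ where
  carrier := {x | x ≠ 0 ∧ padicValRat p x = 0}
  mul_mem' := fun ⟨ha, hva⟩ ⟨hb, hvb⟩ =>
    ⟨mul_ne_zero ha hb, by rw [padicValRat.mul ha hb, hva, hvb, add_zero]⟩
  one_mem' := ⟨one_ne_zero, padicValRat.one⟩

theorem intCast_mem_padicUnitSubmonoid {m : ℤ} (hm : ¬ (p : ℤ) ∣ m) :
    (m : ℚ) ∈ padicUnitSubmonoid p :=
  ⟨Int.cast_ne_zero.mpr (by rintro rfl; exact hm (dvd_zero _)), by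
    rw [padicValRat.of_int, padicValInt.eq_zero_of_not_dvd hm, Nat.cast_zero]⟩

theorem inv_mem_padicUnitSubmonoid {x : ℚ} (hx : x ∈ padicUnitSubmonoid p) :
    x⁻¹ ∈ padicUnitSubmonoid p :=
  ⟨inv_ne_zero hx.1, by rw [padicValRat.inv, hx.2, neg_zero]⟩

theorem zpow_mem_padicUnitSubmonoid {x : ℚ} (hx : x ∈ padicUnitSubmonoid p) (k : ℤ) :
    x ^ k ∈ padicUnitSubmonoid p := by
  obtain ⟨k, rfl | rfl⟩ := Int.eq_nat_or_neg k
  · exact_mod_cast pow_mem hx k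
  · rw [zpow_neg, zpow_natCast]
    exact inv_mem_padicUnitSubmonoid (pow_mem hx k)

theorem div_mem_padicUnitSubmonoid {x y : ℚ} (hx : x ∈ padicUnitSubmonoid p)
    (hy : y ∈ padicUnitSubmonoid p) : x / y ∈ padicUnitSubmonoid p :=
  mul_mem hx (inv_mem_padicUnitSubmonoid hy)

theorem zpow_add_one_mem_padicUnitSubmonoid {x : ℚ} (hx : x ∈ padicUnitSubmonoid p)
    (h : ∀ k : ℕ, x ^ k + 1 ∈ padicUnitSubmonoid p) (k : ℤ) :
    x ^ k + 1 ∈ padicUnitSubmonoid p := by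
  obtain ⟨k, rfl | rfl⟩ := Int.eq_nat_or_neg k
  · exact_mod_cast h k
  · have hxk : x ^ k ≠ 0 := pow_ne_zero k hx.1
    have hinv : x ^ (-(k : ℤ)) + 1 = (x ^ k + 1) / x ^ k := by
      rw [zpow_neg, zpow_natCast]
      field_simp
      ring
    rw [hinv]
    exact div_mem_padicUnitSubmonoid (h k) (pow_mem hx k)

theorem padicValRat_mul_of_mem_padicUnitSubmonoid (x : ℚ) {y : ℚ}
    (hy : y ∈ padicUnitSubmonoid p) : padicValRat p (x * y) = padicValRat p x := by
  rcases eq_or_ne x 0 with rfl | hx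
  · rw [zero_mul]
  · rw [padicValRat.mul hx hy.1, hy.2, add_zero]

end padicUnitSubmonoid

theorem PP_sq (f : ℕ → ℕ) (x : ℚ) :
    PP f (x ^ 2) = PP f x * (x ^ dP f * (∏ i ∈ Finset.Icc 1 (wtP f), (x ^ i + 1)) /
      ((hooksP f).map (fun h => x ^ h + 1)).prod) := by
  have hsq (h : ℤ) : (x ^ 2) ^ h = (x ^ h) ^ 2 := by
    rw [← zpow_natCast x 2, ← zpow_mul, mul_comm, zpow_mul, zpow_natCast]
  have hB : ∏ i ∈ Finset.Icc 1 (wtP f), ((x ^ 2) ^ i - 1) =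
      (∏ i ∈ Finset.Icc 1 (wtP f), (x ^ i - 1)) * ∏ i ∈ Finset.Icc 1 (wtP f), (x ^ i + 1) := by
    rw [← Finset.prod_mul_distrib]
    refine Finset.prod_congr rfl fun i _ => ?_
    rw [← pow_mul, mul_comm, pow_mul]
    ring
  have hC : ((hooksP f).map fun h => (x ^ 2) ^ h - 1).prod =
      ((hooksP f).map fun h => x ^ h - 1).prod * ((hooksP f).map fun h => x ^ h + 1).prod := by
    rw [← Multiset.prod_map_mul]
    refine congrArg _ (Multiset.map_congr rfl fun h _ => ?_)
    rw [hsq]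
    ring
  rw [PP, PP, hsq, hB, hC]
  ring

theorem padicValRat_PP_sq {p : ℕ} [Fact p.Prime] (f : ℕ → ℕ) {x : ℚ}
    (hx : x ∈ padicUnitSubmonoid p) (h : ∀ k : ℕ, x ^ k + 1 ∈ padicUnitSubmonoid p) :
    padicValRat p (PP f (x ^ 2)) = padicValRat p (PP f x) := by
  rw [PP_sq, padicValRat_mul_of_mem_padicUnitSubmonoid]
  refine div_mem_padicUnitSubmonoid
    (mul_mem (zpow_mem_padicUnitSubmonoid hx _) (prod_mem fun i _ => h i))
    (multiset_prod_mem _ fun y hy => ?_)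
  obtain ⟨k, -, rfl⟩ := Multiset.mem_map.mp hy
  exact zpow_add_one_mem_padicUnitSubmonoid hx h k

theorem padicValRat_P_q_sq_eq_padicValRat_P_neg_q_general
    (l : ℕ) (hl : l.Prime) (hlodd : Odd l) (q : ℤ) (hq : ¬ (l : ℤ) ∣ q)
    (he : Odd (orderOf ((-q : ℤ) : ZMod l)))
    (f : ℕ → ℕ) :
    padicValRat l (PP f ((q : ℚ) ^ 2)) = padicValRat l (PP f (-(q : ℚ))) := by
  have : Fact l.Prime := ⟨hl⟩
  have : Fact (2 < l) := ⟨hl.two_le.lt_of_ne fun h => by rw [← h] at hlodd; contradiction⟩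
  have hx : ((-q : ℤ) : ℚ) ∈ padicUnitSubmonoid l :=
    intCast_mem_padicUnitSubmonoid (by rwa [dvd_neg])
  have hadd (k : ℕ) : ((-q : ℤ) : ℚ) ^ k + 1 ∈ padicUnitSubmonoid l := by
    exact_mod_cast intCast_mem_padicUnitSubmonoid
      (Int.not_dvd_pow_add_one_of_odd_orderOf he ZMod.neg_one_ne_one k)
  simpa using padicValRat_PP_sq f hx hadd

/-- Let `l` be an odd prime, `q ≥ 2` an integer not divisible by `l`,
and suppose the multiplicative order of `-q` modulo `l` is odd.  Then for every
partition `λ` of `n`, the `l`-adic valuation of `P_λ(q²)` equals the `l`-adic valuation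
of `P_λ(−q)` (so the unipotent character degrees `P_λ(q²)` of `GL_n(q²)` and
`|P_λ(−q)|` of `U_n(q)` have the same `l`-part). -/
theorem padicValRat_P_q_sq_eq_padicValRat_P_neg_q
    (l : ℕ) (hl : l.Prime) (hlodd : Odd l) (q : ℤ) (hq2 : 2 ≤ q) (hq : ¬ (l : ℤ) ∣ q)
    (he : Odd (orderOf ((-q : ℤ) : ZMod l)))
    (n : ℕ) (f : ℕ → ℕ) (hf : IsPartition f) (hfn : wtP f = n) :
    padicValRat l (PP f ((q : ℚ) ^ 2)) = padicValRat l (PP f (-(q : ℚ))) :=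
  padicValRat_P_q_sq_eq_padicValRat_P_neg_q_general l hl hlodd q hq he f
end

section
/- Let l be an odd prime, let q be an integer not divisible by l, and suppose that the multiplicative order e of −q modulo l is odd. Let λ ⊆ μ be partitions such that μ is obtained from λ by adding an e-hook, let (r,c) be an addable corner of λ such that the cells (r,c), (r+1,c), (r,c+1) all lie in the Young diagram of μ and (r+1,c+1) is an addable corner of μ. Let λ̄ be λ with the cell (r,c) added and μ̄ be μ with the cell (r+1,c+1) added. Then R_λ · R_{μ̄} = R_{λ̄} · R_μ in ℤ/lℤ. -/
/-- `R_λ = (−q)^{d_λ} · ∏_{i=1}^{|λ|} ((−q)^i + 1) · (∏_{h ∈ hooks(λ)} ((−q)^h + 1))⁻¹`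
computed in the field `ℤ/lℤ`. -/
noncomputable def RP (l : ℕ) [Fact l.Prime] (q : ℤ) (f : ℕ → ℕ) : ZMod l :=
  ((-q : ℤ) : ZMod l) ^ dP f *
    (∏ i ∈ Finset.Icc 1 (wtP f), (((-q : ℤ) : ZMod l) ^ i + 1)) *
    (((hooksP f).map (fun h => ((-q : ℤ) : ZMod l) ^ h + 1)).prod)⁻¹

def InDiagram (f : ℕ → ℕ) (p : ℕ × ℕ) : Prop :=
  1 ≤ p.1 ∧ 1 ≤ p.2 ∧ p.2 ≤ f p.1

/-- Two cells are edge-adjacent. -/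
def AdjCell (p q : ℕ × ℕ) : Prop :=
  (p.1 = q.1 ∧ (p.2 + 1 = q.2 ∨ q.2 + 1 = p.2)) ∨
  (p.2 = q.2 ∧ (p.1 + 1 = q.1 ∨ q.1 + 1 = p.1))

/-- `μ = g` is obtained from `λ = f` by adding an `e`-hook: the diagram of `f` is
contained in that of `g`, `|g| = |f| + e`, and the skew diagram `g ∖ f` is a rim hook
(connected through edge-adjacent cells and containing no 2×2 square of cells). -/
def AddsEHook (e : ℕ) (f g : ℕ → ℕ) : Prop :=
  (∀ i, f i ≤ g i) ∧ wtP g = wtP f + e ∧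
  (∀ p q : ℕ × ℕ,
      (InDiagram g p ∧ ¬ InDiagram f p) → (InDiagram g q ∧ ¬ InDiagram f q) →
      Relation.ReflTransGen
        (fun a b => (InDiagram g a ∧ ¬ InDiagram f a) ∧
          (InDiagram g b ∧ ¬ InDiagram f b) ∧ AdjCell a b) p q) ∧
  ¬ ∃ i j : ℕ,
      (InDiagram g (i, j) ∧ ¬ InDiagram f (i, j)) ∧
      (InDiagram g (i + 1, j) ∧ ¬ InDiagram f (i + 1, j)) ∧
      (InDiagram g (i, j + 1) ∧ ¬ InDiagram f (i, j + 1)) ∧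
      (InDiagram g (i + 1, j + 1) ∧ ¬ InDiagram f (i + 1, j + 1))

/-!
Adding an addable corner `(a, b)` to a partition raises `d` by `a - 1` and the size by one,
creates a hook of length `1`, and raises by one exactly the hook lengths in row `a` and
column `b`. So, with `x = -q`, the ratio `R_λ̄ / R_λ` is `x ^ (r - 1) (x ^ (|λ| + 1) + 1) / (x + 1)`
times `∏ (x ^ h + 1) / ∏ (x ^ (h + 1) + 1)` over the hook lengths `h` of `λ` in row `r` and
column `c`, and likewise for `R_μ̄ / R_μ` with row `r + 1` and column `c + 1` of `μ`.

As `μ ∖ λ` is a rim hook containing `(r, c)`, the hook lengths of `μ` in row `r + 1` are those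
of `λ` in row `r` plus the hook `u` at the leftmost column of the rim hook, and those of `μ` in
column `c + 1` are those of `λ` in column `c` plus the hook `v` at its top row. Since a rim hook
has size width + height - 1, `u + v + 1 = e`, so `x ^ (u + v + 1) = 1` and
`(x ^ (u + 1) + 1) (x ^ (v + 1) + 1) = x (x ^ u + 1) (x ^ v + 1)`: this factor `x` makes up for
`d_μ̄ - d_μ = r` versus `d_λ̄ - d_λ = r - 1`, while `x ^ (|μ| + 1) = x ^ (|λ| + 1)`. Odd order of
`x` makes every `x ^ t + 1` nonzero.
-/

open Finset

namespace IsPartition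

variable {f : ℕ → ℕ}

theorem apply_succ_le (hf : IsPartition f) {i : ℕ} (hi : 1 ≤ i) : f (i + 1) ≤ f i :=
  hf.2.1 i hi

theorem apply_le_apply (hf : IsPartition f) {a b : ℕ} (ha : 1 ≤ a) (hab : a ≤ b) : f b ≤ f a :=
  antitoneOn_nat_Ici_of_succ_le (fun _ hn => hf.apply_succ_le hn) ha (ha.trans hab) hab

theorem finite_support (hf : IsPartition f) : (Function.support f).Finite := by
  obtain ⟨N, hN⟩ := hf.2.2
  refine (Set.finite_Iio N).subset fun i hi => ?_
  by_contra h
  exact hi (hN i (not_lt.mp h))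

theorem finite_setOf_le (hf : IsPartition f) {j : ℕ} (hj : 1 ≤ j) :
    {i | 1 ≤ i ∧ j ≤ f i}.Finite := by
  obtain ⟨N, hN⟩ := hf.2.2
  refine (Set.finite_Iio N).subset fun i ⟨_, hi⟩ => ?_
  by_contra h
  have := hN i (not_lt.mp h)
  omega

theorem le_conjP_iff (hf : IsPartition f) {i j : ℕ} (hi : 1 ≤ i) (hj : 1 ≤ j) :
    j ≤ f i ↔ i ≤ conjP f j := by
  constructor
  · intro hji
    calc i = (Set.Icc 1 i).ncard := by rw [Set.ncard_Icc_nat, Nat.add_sub_cancel]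
      _ ≤ conjP f j := Set.ncard_le_ncard
          (fun k hk => ⟨hk.1, hji.trans (hf.apply_le_apply hk.1 hk.2)⟩) (hf.finite_setOf_le hj)
  · intro hij
    by_contra hji
    have hsub : {k | 1 ≤ k ∧ j ≤ f k} ⊆ Set.Icc 1 (i - 1) := fun k ⟨hk, hjk⟩ =>
      ⟨hk, by by_contra hki; exact hji (hjk.trans (hf.apply_le_apply hi (by omega)))⟩
    have := Set.ncard_le_ncard hsub (Set.finite_Icc _ _)
    rw [Set.ncard_Icc_nat] at this
    unfold conjP at hij
    omega

theorem conjP_eq_zero (hf : IsPartition f) {j : ℕ} (hj : f 1 < j) : conjP f j = 0 := by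
  by_contra h
  have := (hf.le_conjP_iff le_rfl (show 1 ≤ j by omega)).mpr (by omega)
  omega

theorem finite_support_conjP (hf : IsPartition f) : (Function.support (conjP f)).Finite :=
  (Set.finite_Iio (f 1 + 1)).subset fun j hj => by
    by_contra h
    exact hj (hf.conjP_eq_zero (by simp at h; omega))

theorem conjP_le_conjP {m : ℕ → ℕ} (hm : IsPartition m) (hfm : ∀ i, f i ≤ m i) {j : ℕ}
    (hj : 1 ≤ j) : conjP f j ≤ conjP m j :=
  Set.ncard_le_ncard (fun i ⟨hi, hji⟩ => ⟨hi, hji.trans (hfm i)⟩) (hm.finite_setOf_le hj)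

end IsPartition

noncomputable def cellsP (f : ℕ → ℕ) : Finset (ℕ × ℕ) :=
  ((Icc 1 (conjP f 1)) ×ˢ (Icc 1 (f 1))).filter (fun p => p.2 ≤ f p.1)

noncomputable def hookP (f : ℕ → ℕ) (p : ℕ × ℕ) : ℤ :=
  (f p.1 : ℤ) - (p.2 : ℤ) + (conjP f p.2 : ℤ) - (p.1 : ℤ) + 1

theorem hooksP_eq_map_hookP (f : ℕ → ℕ) : hooksP f = (cellsP f).val.map (hookP f) :=
  rfl

theorem IsPartition.mem_cellsP {f : ℕ → ℕ} (hf : IsPartition f) {p : ℕ × ℕ} :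
    p ∈ cellsP f ↔ InDiagram f p := by
  obtain ⟨i, j⟩ := p
  simp only [cellsP, InDiagram, mem_filter, mem_product, mem_Icc]
  constructor
  · rintro ⟨⟨⟨hi, -⟩, hj, -⟩, hji⟩
    exact ⟨hi, hj, hji⟩
  · rintro ⟨hi, hj, hji⟩
    exact ⟨⟨⟨hi, (hf.le_conjP_iff hi le_rfl).mp (by omega)⟩, hj,
      hji.trans (hf.apply_le_apply le_rfl hi)⟩, hji⟩

noncomputable def rowColHooks (f : ℕ → ℕ) (a b : ℕ) : Multiset ℤ :=
  (Icc 1 (f a)).val.map (fun j => hookP f (a, j)) +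
    (Icc 1 (conjP f b)).val.map (fun i => hookP f (i, b))

theorem finsum_add_ite_eq {α M : Type*} [DecidableEq α] [AddCommMonoid M] {g g' : α → M}
    (hg : (Function.support g).Finite) (b : α) (δ : M)
    (h : ∀ i, g' i = g i + if i = b then δ else 0) : ∑ᶠ i, g' i = ∑ᶠ i, g i + δ := by
  have hδ : (Function.support fun i => if i = b then δ else 0).Finite :=
    (Set.finite_singleton b).subset fun i hi => by by_contra hib; simp_all
  rw [finsum_congr h, finsum_add_distrib hg hδ, finsum_eq_single _ b fun i hib => if_neg hib,
    if_pos rfl]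

def addCell (f : ℕ → ℕ) (a : ℕ) : ℕ → ℕ := fun i => if i = a then f i + 1 else f i

theorem addCell_eq_add_ite (f : ℕ → ℕ) (a i : ℕ) :
    addCell f a i = f i + if i = a then 1 else 0 := by
  unfold addCell
  split_ifs <;> rfl

theorem wtP_addCell {f : ℕ → ℕ} (hf : (Function.support f).Finite) (a : ℕ) :
    wtP (addCell f a) = wtP f + 1 :=
  finsum_add_ite_eq hf a 1 (addCell_eq_add_ite f a)

structure IsAddableCorner (f : ℕ → ℕ) (a b : ℕ) : Prop where
  one_le_row : 1 ≤ a
  one_le_col : 1 ≤ b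
  apply_row : f a = b - 1
  conjP_col : conjP f b = a - 1

namespace IsAddableCorner

variable {f : ℕ → ℕ} {a b : ℕ}

theorem isPartition_addCell (hf : IsPartition f) (h : IsAddableCorner f a b) :
    IsPartition (addCell f a) := by
  obtain ⟨ha, hb, hfa, hfb⟩ := h
  refine ⟨by simp [addCell, show 0 ≠ a by omega, hf.1], fun i hi => ?_, ?_⟩
  · have hmono := hf.apply_succ_le hi
    obtain rfl | hia := eq_or_ne a (i + 1)
    · have : b ≤ f i := (hf.le_conjP_iff hi hb).mpr (by omega)
      simp only [addCell, if_pos, show i ≠ i + 1 by omega, if_false]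
      omega
    · simp only [addCell, if_neg hia.symm]
      split_ifs <;> omega
  · obtain ⟨N, hN⟩ := hf.2.2
    exact ⟨N + a + 1, fun i hi => by simp [addCell, show i ≠ a by omega, hN i (by omega)]⟩

theorem conjP_addCell (hf : IsPartition f) (h : IsAddableCorner f a b) (j : ℕ) :
    conjP (addCell f a) j = if j = b then a else conjP f j := by
  obtain ⟨ha, hb, hfa, hfb⟩ := h
  split_ifs with hjb
  · subst hjb
    have hset : {i | 1 ≤ i ∧ j ≤ addCell f a i} = Set.Icc 1 a := by
      ext i
      simp only [addCell, Set.mem_ofPred_eq, Set.mem_Icc]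
      constructor
      · rintro ⟨hi, hji⟩
        refine ⟨hi, ?_⟩
        split_ifs at hji with hia
        · omega
        · have := (hf.le_conjP_iff hi hb).mp hji
          omega
      · rintro ⟨hi, hia⟩
        refine ⟨hi, ?_⟩
        split_ifs with hia'
        · subst hia'
          omega
        · exact (hf.le_conjP_iff hi hb).mpr (by omega)
    rw [conjP, hset, Set.ncard_Icc_nat, Nat.add_sub_cancel]
  · unfold conjP
    congr 1
    ext i
    simp only [addCell, Set.mem_ofPred_eq]
    split_ifs with hia
    · subst hia
      constructor <;> intro <;> omega
    · rfl

theorem dP_addCell (hf : IsPartition f) (h : IsAddableCorner f a b) :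
    dP (addCell f a) = dP f + a - 1 := by
  have hsq := finsum_add_ite_eq (g := fun i => (conjP f i : ℤ) ^ 2)
    (g' := fun i => (conjP (addCell f a) i : ℤ) ^ 2)
    (hf.finite_support_conjP.subset fun i hi => by simp_all) b (2 * a - 1) fun i => by
      rw [h.conjP_addCell hf]
      split_ifs with hib
      · rw [hib, h.conjP_col, Nat.cast_sub h.one_le_row]
        ring
      · ring
  have hlin := finsum_add_ite_eq (g := fun i : ℕ => (i : ℤ) * f i)
    (g' := fun i : ℕ => (i : ℤ) * addCell f a i)
    (hf.finite_support.subset fun i hi => by simp_all) a (a : ℤ) fun i => by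
      rw [addCell_eq_add_ite]
      split_ifs with hia
      · rw [hia]
        push_cast
        ring
      · simp
  rw [dP, dP, hsq, hlin]
  ring

theorem cellsP_addCell (hf : IsPartition f) (h : IsAddableCorner f a b) :
    cellsP (addCell f a) = insert (a, b) (cellsP f) := by
  ext ⟨i, j⟩
  rw [(h.isPartition_addCell hf).mem_cellsP, mem_insert, hf.mem_cellsP]
  have := h.apply_row
  have := h.one_le_row
  have := h.one_le_col
  simp only [InDiagram, addCell, Prod.mk.injEq]
  split_ifs with hia
  · subst hia
    constructor <;> intro <;> omega
  · constructor <;> intro <;> omega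

theorem hookP_addCell (hf : IsPartition f) (h : IsAddableCorner f a b) (p : ℕ × ℕ) :
    hookP (addCell f a) p =
      hookP f p + (if p.1 = a then 1 else 0) + (if p.2 = b then 1 else 0) := by
  have hcol := h.conjP_col
  have := h.one_le_row
  simp only [hookP, h.conjP_addCell hf, addCell]
  split_ifs <;> subst_vars <;> push_cast [hcol] <;> omega

theorem hookP_self (h : IsAddableCorner f a b) : hookP f (a, b) = -1 := by
  have := h.apply_row
  have := h.conjP_col
  have := h.one_le_row
  have := h.one_le_col
  simp only [hookP]
  omega

theorem filter_row_cellsP (hf : IsPartition f) (h : IsAddableCorner f a b) :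
    (cellsP f).val.filter (fun p => p.1 = a) = (Icc 1 (f a)).val.map (fun j => (a, j)) := by
  refine (Multiset.Nodup.ext ((cellsP f).nodup.filter _)
    ((Icc 1 (f a)).nodup.map fun _ _ => congrArg Prod.snd)).mpr fun ⟨i, j⟩ => ?_
  have := h.one_le_row
  rw [Multiset.mem_filter, Finset.mem_val, hf.mem_cellsP, Multiset.mem_map]
  simp only [InDiagram, Finset.mem_val, mem_Icc, Prod.mk.injEq]
  constructor
  · rintro ⟨⟨-, hj, hji⟩, rfl⟩
    exact ⟨j, ⟨hj, hji⟩, rfl, rfl⟩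
  · rintro ⟨j, hj, rfl, rfl⟩
    exact ⟨⟨this, hj⟩, rfl⟩

theorem filter_col_cellsP (hf : IsPartition f) (h : IsAddableCorner f a b) :
    ((cellsP f).val.filter (fun p => ¬ p.1 = a)).filter (fun p => p.2 = b) =
      (Icc 1 (conjP f b)).val.map (fun i => (i, b)) := by
  refine (Multiset.Nodup.ext (((cellsP f).nodup.filter _).filter _)
    ((Icc 1 (conjP f b)).nodup.map fun _ _ => congrArg Prod.fst)).mpr fun ⟨i, j⟩ => ?_
  have := h.conjP_col
  have := h.one_le_col
  rw [Multiset.mem_filter, Multiset.mem_filter, Finset.mem_val, hf.mem_cellsP, Multiset.mem_map]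
  simp only [InDiagram, Finset.mem_val, mem_Icc, Prod.mk.injEq]
  constructor
  · rintro ⟨⟨⟨hi, -, hji⟩, -⟩, rfl⟩
    exact ⟨i, ⟨hi, (hf.le_conjP_iff hi this).mp hji⟩, rfl, rfl⟩
  · rintro ⟨i, ⟨hi, hib⟩, rfl, rfl⟩
    exact ⟨⟨⟨hi, this, (hf.le_conjP_iff hi this).mpr hib⟩, by omega⟩, rfl⟩

theorem hooksP_addCell (hf : IsPartition f) (h : IsAddableCorner f a b) :
    hooksP (addCell f a) + rowColHooks f a b =
      1 ::ₘ (hooksP f + (rowColHooks f a b).map (· + 1)) := by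
  have hab : (a, b) ∉ cellsP f := by
    rw [hf.mem_cellsP, InDiagram, h.apply_row]
    omega
  have hcells := Multiset.filter_add_not (fun p : ℕ × ℕ => p.1 = a) (cellsP f).val
  rw [← Multiset.filter_add_not (fun p : ℕ × ℕ => p.2 = b)
    ((cellsP f).val.filter fun p => ¬ p.1 = a), h.filter_row_cellsP hf,
    h.filter_col_cellsP hf] at hcells
  set rest := ((cellsP f).val.filter (fun p => ¬ p.1 = a)).filter (fun p => ¬ p.2 = b)
  have hrow : (Icc 1 (f a)).val.map (fun j => hookP (addCell f a) (a, j)) =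
      (Icc 1 (f a)).val.map (fun j => hookP f (a, j) + 1) := by
    refine Multiset.map_congr rfl fun j hj => ?_
    rw [Finset.mem_val, mem_Icc, h.apply_row] at hj
    rw [h.hookP_addCell hf, if_pos rfl, if_neg (by simp only; omega), add_zero]
  have hcol : (Icc 1 (conjP f b)).val.map (fun i => hookP (addCell f a) (i, b)) =
      (Icc 1 (conjP f b)).val.map (fun i => hookP f (i, b) + 1) := by
    refine Multiset.map_congr rfl fun i hi => ?_
    rw [Finset.mem_val, mem_Icc, h.conjP_col] at hi
    rw [h.hookP_addCell hf, if_neg (by simp only; omega), if_pos rfl, add_zero]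
  have hrest : rest.map (hookP (addCell f a)) = rest.map (hookP f) := by
    refine Multiset.map_congr rfl fun p hp => ?_
    simp only [rest, Multiset.mem_filter] at hp
    rw [h.hookP_addCell hf, if_neg hp.1.2, if_neg hp.2, add_zero, add_zero]
  rw [hooksP_eq_map_hookP, hooksP_eq_map_hookP, h.cellsP_addCell hf,
    Finset.insert_val_of_notMem hab, Multiset.map_cons, h.hookP_addCell hf, h.hookP_self,
    ← hcells]
  simp only [if_pos, rowColHooks, Multiset.map_add, Multiset.map_map, Function.comp_def, hrow,
    hcol, hrest]
  rw [Multiset.cons_add]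
  congr 1
  abel

end IsAddableCorner

theorem exists_row_crossing {S : ℕ × ℕ → Prop} {p q : ℕ × ℕ}
    (hpq : Relation.ReflTransGen (fun x y => S x ∧ S y ∧ AdjCell x y) p q) {i : ℕ}
    (hpi : p.1 ≤ i) (hiq : i < q.1) : ∃ j, S (i, j) ∧ S (i + 1, j) := by
  induction hpq using Relation.ReflTransGen.head_induction_on with
  | refl => omega
  | @head x y hxy _ ih =>
    obtain ⟨hx, hy, hadj⟩ := hxy
    by_cases hyi : y.1 ≤ i
    · exact ih hyi
    · obtain ⟨x1, x2⟩ := x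
      obtain ⟨y1, y2⟩ := y
      simp only [AdjCell] at hadj hpi hyi
      obtain ⟨rfl, -⟩ | ⟨rfl, hstep⟩ := hadj
      · omega
      · obtain rfl : x1 = i := by omega
        obtain rfl : y1 = x1 + 1 := by omega
        exact ⟨x2, hx, hy⟩

theorem exists_col_crossing {S : ℕ × ℕ → Prop} {p q : ℕ × ℕ}
    (hpq : Relation.ReflTransGen (fun x y => S x ∧ S y ∧ AdjCell x y) p q) {j : ℕ}
    (hpj : p.2 ≤ j) (hjq : j < q.2) : ∃ i, S (i, j) ∧ S (i, j + 1) := by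
  have hswap : Relation.ReflTransGen (fun x y => S x.swap ∧ S y.swap ∧ AdjCell x y)
      p.swap q.swap :=
    hpq.lift Prod.swap fun x y ⟨hx, hy, hxy⟩ => ⟨hx, hy, by unfold AdjCell at *; tauto⟩
  exact exists_row_crossing hswap hpj hjq

def IsSkewCell (f m : ℕ → ℕ) (p : ℕ × ℕ) : Prop :=
  InDiagram m p ∧ ¬ InDiagram f p

theorem isSkewCell_iff {f m : ℕ → ℕ} {i j : ℕ} :
    IsSkewCell f m (i, j) ↔ 1 ≤ i ∧ f i < j ∧ j ≤ m i := by
  simp only [IsSkewCell, InDiagram]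
  omega

theorem apply_eq_of_forall_not_isSkewCell {f m : ℕ → ℕ} {i : ℕ} (hi : 1 ≤ i) (hfm : f i ≤ m i)
    (h : ∀ j, ¬ IsSkewCell f m (i, j)) : m i = f i := by
  have := h (f i + 1)
  rw [isSkewCell_iff] at this
  omega

theorem conjP_eq_of_forall_not_isSkewCell {f m : ℕ → ℕ} (hf : IsPartition f)
    (hm : IsPartition m) (hfm : ∀ i, f i ≤ m i) {j : ℕ} (hj : 1 ≤ j)
    (h : ∀ i, ¬ IsSkewCell f m (i, j)) : conjP m j = conjP f j := by
  refine le_antisymm ?_ (hm.conjP_le_conjP hfm hj)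
  by_contra! hlt
  have hfa : ¬ j ≤ f (conjP f j + 1) := fun hle => by
    have := (hf.le_conjP_iff (by omega) hj).mp hle
    omega
  have hma : j ≤ m (conjP f j + 1) := (hm.le_conjP_iff (by omega) hj).mpr hlt
  exact h (conjP f j + 1) (isSkewCell_iff.mpr ⟨by omega, by omega, hma⟩)

theorem wtP_sub_wtP_eq_sum {f m : ℕ → ℕ} (hf : (Function.support f).Finite)
    (hm : (Function.support m).Finite) {s : Finset ℕ} (h : ∀ i ∉ s, m i = f i) :
    (wtP m : ℤ) - wtP f = ∑ i ∈ s, ((m i : ℤ) - f i) := by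
  have hcast {g : ℕ → ℕ} (hg : (Function.support g).Finite) :
      (wtP g : ℤ) = ∑ᶠ i, (g i : ℤ) :=
    (Nat.castAddMonoidHom ℤ).map_finsum hg
  rw [hcast hf, hcast hm, ← finsum_sub_distrib (hm.subset fun i hi => by simp_all)
    (hf.subset fun i hi => by simp_all)]
  refine finsum_eq_sum_of_support_subset _ fun i hi => ?_
  by_contra his
  exact hi (by simp [h i his])

theorem sum_Icc_sub_eq_of_apply_succ {f m : ℕ → ℕ} {r0 R : ℕ}
    (hmid : ∀ i, r0 ≤ i → i < R → m (i + 1) = f i + 1) {k : ℕ} (hr0k : r0 ≤ k) (hkR : k ≤ R) :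
    ∑ i ∈ Icc r0 k, ((m i : ℤ) - f i) = m r0 - f k + k - r0 := by
  induction k, hr0k using Nat.le_induction with
  | base => simp
  | succ k hr0k ih =>
    rw [sum_Icc_succ_top (by omega), ih (by omega), hmid k hr0k (by omega)]
    push_cast
    ring

theorem val_Icc_one_add_one (k : ℕ) : (Icc 1 (k + 1)).val = (k + 1) ::ₘ (Icc 1 k).val := by
  rw [← insert_Icc_right_eq_Icc_add_one (by omega), insert_val_of_notMem (by simp)]

theorem map_Icc_eq_cons {α : Type*} {A B : ℕ → α} {c0 c : ℕ} (hc0 : 1 ≤ c0) (hc : c0 ≤ c)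
    (hlow : ∀ j, 1 ≤ j → j < c0 → A j = B j) (hmid : ∀ j, c0 ≤ j → j < c → A (j + 1) = B j) :
    (Icc 1 c).val.map A = A c0 ::ₘ (Icc 1 (c - 1)).val.map B := by
  induction c, hc using Nat.le_induction with
  | base =>
    obtain ⟨k, rfl⟩ : ∃ k, c0 = k + 1 := ⟨c0 - 1, by omega⟩
    rw [val_Icc_one_add_one, Multiset.map_cons, Nat.add_sub_cancel]
    refine congrArg _ (Multiset.map_congr rfl fun j hj => ?_)
    rw [Finset.mem_val, mem_Icc] at hj
    exact hlow j hj.1 (by omega)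
  | succ c hc ih =>
    obtain ⟨k, rfl⟩ : ∃ k, c = k + 1 := ⟨c - 1, by omega⟩
    rw [val_Icc_one_add_one, Multiset.map_cons, ih fun j hj hjc => hmid j hj (by omega),
      Nat.add_sub_cancel, Nat.add_sub_cancel, val_Icc_one_add_one, Multiset.map_cons,
      hmid (k + 1) hc (by omega), Multiset.cons_swap]

namespace AddsEHook

variable {e : ℕ} {f m : ℕ → ℕ}

theorem apply_le (h : AddsEHook e f m) (i : ℕ) : f i ≤ m i :=
  h.1 i

theorem wtP_eq (h : AddsEHook e f m) : wtP m = wtP f + e :=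
  h.2.1

theorem connected (h : AddsEHook e f m) {p q : ℕ × ℕ} (hp : IsSkewCell f m p)
    (hq : IsSkewCell f m q) :
    Relation.ReflTransGen (fun x y => IsSkewCell f m x ∧ IsSkewCell f m y ∧ AdjCell x y) p q :=
  h.2.2.1 p q hp hq

theorem not_square (h : AddsEHook e f m) (i j : ℕ) :
    ¬ (IsSkewCell f m (i, j) ∧ IsSkewCell f m (i + 1, j) ∧ IsSkewCell f m (i, j + 1) ∧
      IsSkewCell f m (i + 1, j + 1)) :=
  fun hsq => h.2.2.2 ⟨i, j, hsq⟩

-- `≥` comes from a vertical step of a path of skew cells from `p` to `q`, and `≤` from the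
-- absence of a 2×2 square of skew cells in rows `i` and `i + 1`.
theorem apply_succ_eq (hf : IsPartition f) (hm : IsPartition m) (h : AddsEHook e f m)
    {p q : ℕ × ℕ} (hp : IsSkewCell f m p) (hq : IsSkewCell f m q) {i : ℕ} (hpi : p.1 ≤ i)
    (hiq : i < q.1) : m (i + 1) = f i + 1 := by
  obtain ⟨j, hij, hi1j⟩ := exists_row_crossing (h.connected hp hq) hpi hiq
  have hi : 1 ≤ i := hp.1.1.trans hpi
  rw [isSkewCell_iff] at hij hi1j
  refine le_antisymm ?_ (by omega)
  by_contra! hlt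
  have := hf.apply_succ_le hi
  have := hm.apply_succ_le hi
  exact h.not_square i (f i + 1) (by simp only [isSkewCell_iff]; omega)

theorem conjP_succ_eq (hf : IsPartition f) (hm : IsPartition m) (h : AddsEHook e f m)
    {p q : ℕ × ℕ} (hp : IsSkewCell f m p) (hq : IsSkewCell f m q) {j : ℕ} (hpj : p.2 ≤ j)
    (hjq : j < q.2) : conjP m (j + 1) = conjP f j + 1 := by
  obtain ⟨i, hij, hij1⟩ := exists_col_crossing (h.connected hp hq) hpj hjq
  have hj : 1 ≤ j := hp.1.2.1.trans hpj
  rw [isSkewCell_iff] at hij hij1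
  have hi_le : i ≤ conjP m (j + 1) := (hm.le_conjP_iff hij.1 (by omega)).mp hij1.2.2
  have hi_gt : conjP f j < i := by
    by_contra! hle
    exact absurd ((hf.le_conjP_iff hij.1 hj).mpr hle) (by omega)
  refine le_antisymm ?_ (by omega)
  by_contra! hlt
  set a := conjP f j + 1
  have hma : j + 1 ≤ m a := (hm.le_conjP_iff (by omega) (by omega)).mpr (by omega)
  have hma1 : j + 1 ≤ m (a + 1) := (hm.le_conjP_iff (by omega) (by omega)).mpr (by omega)
  have hfa : f a < j := by
    by_contra! hle
    exact absurd ((hf.le_conjP_iff (by omega) hj).mp hle) (by omega)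
  have := hf.apply_succ_le (i := a) (by omega)
  exact h.not_square a j (by simp only [isSkewCell_iff]; omega)

-- The rim hook has width `m r0 - c0 + 1` and height `conjP m c0 - r0 + 1`, and its size is
-- their sum minus one.
theorem size_eq (hf : IsPartition f) (hm : IsPartition m) (h : AddsEHook e f m)
    {r0 j0 i0 c0 : ℕ} (hr0 : IsSkewCell f m (r0, j0)) (hc0 : IsSkewCell f m (i0, c0))
    (htop : ∀ i j, IsSkewCell f m (i, j) → r0 ≤ i)
    (hleft : ∀ i j, IsSkewCell f m (i, j) → c0 ≤ j) :
    (e : ℤ) + r0 + c0 = m r0 + conjP m c0 + 1 := by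
  set R := conjP m c0
  rw [isSkewCell_iff] at hr0 hc0
  have hi0R : i0 ≤ R := (hm.le_conjP_iff hc0.1 (by omega)).mp hc0.2.2
  have hfR := hf.apply_le_apply hc0.1 hi0R
  have hmR : c0 ≤ m R := (hm.le_conjP_iff (by omega) (by omega)).mpr le_rfl
  have hR : IsSkewCell f m (R, c0) := isSkewCell_iff.mpr ⟨by omega, by omega, hmR⟩
  have hcR : c0 = f R + 1 := by
    have := hleft R (f R + 1) (isSkewCell_iff.mpr ⟨by omega, by omega, by omega⟩)
    omega
  have hout : ∀ i ∉ Icc r0 R, m i = f i := by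
    intro i hi
    rw [mem_Icc, not_and_or, not_le, not_le] at hi
    rcases Nat.eq_zero_or_pos i with rfl | hi1
    · rw [hf.1, hm.1]
    refine apply_eq_of_forall_not_isSkewCell hi1 (h.apply_le i) fun j hij => ?_
    have := htop i j hij
    have := hleft i j hij
    rw [isSkewCell_iff] at hij
    have := (hm.le_conjP_iff hi1 (by omega)).mp (by omega : c0 ≤ m i)
    omega
  have hsum := wtP_sub_wtP_eq_sum hf.finite_support hm.finite_support hout
  rw [h.wtP_eq, sum_Icc_sub_eq_of_apply_succ (fun i => h.apply_succ_eq hf hm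
    (isSkewCell_iff.mpr hr0) hR) (htop _ _ hR) le_rfl] at hsum
  push_cast at hsum
  omega

theorem map_hookP_row_succ (hf : IsPartition f) (hm : IsPartition m) (h : AddsEHook e f m)
    {r c i0 c0 : ℕ} (hfr : f r = c - 1) (hmr : m (r + 1) = c) (hrc : IsSkewCell f m (r, c))
    (hc0 : IsSkewCell f m (i0, c0)) (hleft : ∀ i j, IsSkewCell f m (i, j) → c0 ≤ j) :
    (Icc 1 c).val.map (fun j => hookP m (r + 1, j)) =
      hookP m (r + 1, c0) ::ₘ (Icc 1 (c - 1)).val.map (fun j => hookP f (r, j)) := by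
  have := hrc.1.2.1
  refine map_Icc_eq_cons hc0.1.2.1 (hleft _ _ hrc) (fun j hj hjc0 => ?_) fun j hj hjc => ?_
  · have := conjP_eq_of_forall_not_isSkewCell hf hm h.apply_le hj fun i hij => by
      have := hleft i j hij
      omega
    simp only [hookP]
    rw [hmr, this, hfr]
    omega
  · have := h.conjP_succ_eq hf hm hc0 hrc hj hjc
    simp only [hookP]
    rw [hmr, this, hfr]
    omega

theorem map_hookP_col_succ (hf : IsPartition f) (hm : IsPartition m) (h : AddsEHook e f m)
    {r c r0 j0 : ℕ} (hfc : conjP f c = r - 1) (hmc : conjP m (c + 1) = r)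
    (hrc : IsSkewCell f m (r, c)) (hr0 : IsSkewCell f m (r0, j0))
    (htop : ∀ i j, IsSkewCell f m (i, j) → r0 ≤ i) :
    (Icc 1 r).val.map (fun i => hookP m (i, c + 1)) =
      hookP m (r0, c + 1) ::ₘ (Icc 1 (r - 1)).val.map (fun i => hookP f (i, c)) := by
  have := hrc.1.1
  refine map_Icc_eq_cons hr0.1.1 (htop _ _ hrc) (fun i hi hir0 => ?_) fun i hi hir => ?_
  · have := apply_eq_of_forall_not_isSkewCell hi (h.apply_le i) fun j hij => by
      have := htop i j hij
      omega
    simp only [hookP]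
    rw [hmc, this, hfc]
    omega
  · have := h.apply_succ_eq hf hm hr0 hrc hi hir
    simp only [hookP]
    rw [hmc, this, hfc]
    omega

theorem rowColHooks_eq (hf : IsPartition f) (hm : IsPartition m) (h : AddsEHook e f m)
    {r c : ℕ} (hc : IsAddableCorner f r c) (hmr : m (r + 1) = c) (hmc : conjP m (c + 1) = r) :
    ∃ u v : ℤ, u + v + 1 = e ∧
      rowColHooks m (r + 1) (c + 1) = u ::ₘ v ::ₘ rowColHooks f r c := by
  classical
  obtain ⟨hr1, hc1, hfr, hfc⟩ := hc
  have hmr' : c + 1 ≤ m r := (hm.le_conjP_iff hr1 (by omega)).mpr hmc.ge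
  have hrc : IsSkewCell f m (r, c) := isSkewCell_iff.mpr ⟨hr1, by omega, by omega⟩
  have hrows : ∃ i j, IsSkewCell f m (i, j) := ⟨r, c, hrc⟩
  have hcols : ∃ j i, IsSkewCell f m (i, j) := ⟨c, r, hrc⟩
  obtain ⟨j0, hr0⟩ := Nat.find_spec hrows
  obtain ⟨i0, hc0⟩ := Nat.find_spec hcols
  have htop i j (hij : IsSkewCell f m (i, j)) : Nat.find hrows ≤ i :=
    Nat.find_min' hrows ⟨j, hij⟩
  have hleft i j (hij : IsSkewCell f m (i, j)) : Nat.find hcols ≤ j :=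
    Nat.find_min' hcols ⟨i, hij⟩
  have hsize := h.size_eq hf hm hr0 hc0 htop hleft
  refine ⟨hookP m (r + 1, Nat.find hcols), hookP m (Nat.find hrows, c + 1), ?_, ?_⟩
  · simp only [hookP]
    rw [hmr, hmc]
    push_cast
    linarith
  rw [rowColHooks, rowColHooks, hmr, hmc, hfr, hfc,
    h.map_hookP_row_succ hf hm hfr hmr hrc hc0 hleft,
    h.map_hookP_col_succ hf hm hfc hmc hrc hr0 htop, Multiset.cons_add, Multiset.add_cons]

end AddsEHook

section OddOrder

variable {K : Type*} [Field K] {x : K}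

theorem ne_zero_of_odd_orderOf (hx : Odd (orderOf x)) : x ≠ 0 := by
  rintro rfl
  rw [orderOf_zero] at hx
  exact Nat.not_odd_zero hx

theorem zpow_add_one_ne_zero_of_odd_orderOf (h2 : (2 : K) ≠ 0) (hx : Odd (orderOf x)) (t : ℤ) :
    x ^ t + 1 ≠ 0 := by
  intro hxt
  set u := Units.mk0 x (ne_zero_of_odd_orderOf hx)
  have hut : u ^ t = -1 := Units.ext (by
    rw [Units.val_zpow_eq_zpow_val, Units.val_mk0, Units.val_neg, Units.val_one]
    linear_combination hxt)
  have hcop : IsCoprime (orderOf u : ℤ) 2 := by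
    rw [← orderOf_units, Units.val_mk0]
    exact Nat.Coprime.isCoprime (Nat.coprime_two_right.mpr hx)
  have hdvd : (orderOf u : ℤ) ∣ t * 2 :=
    orderOf_dvd_iff_zpow_eq_one.mpr (by rw [zpow_mul, hut]; simp)
  have hut1 := orderOf_dvd_iff_zpow_eq_one.mp (hcop.dvd_of_dvd_mul_right hdvd)
  have hval := congrArg Units.val (hut ▸ hut1)
  rw [Units.val_neg, Units.val_one] at hval
  exact h2 (by linear_combination -hval)

theorem zpow_add_one_mul_zpow_add_one (hx : x ≠ 0) {u v : ℤ} (huv : x ^ (u + v + 1) = 1) :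
    (x ^ (u + 1) + 1) * (x ^ (v + 1) + 1) = x * ((x ^ u + 1) * (x ^ v + 1)) := by
  rw [zpow_add_one₀ hx, zpow_add₀ hx] at huv
  rw [zpow_add_one₀ hx, zpow_add_one₀ hx]
  linear_combination (x - 1) * huv

end OddOrder

theorem ZMod.two_ne_zero_of_odd {l : ℕ} [Fact l.Prime] (hl : Odd l) : (2 : ZMod l) ≠ 0 :=
  Ring.two_ne_zero (by
    rw [ZMod.ringChar_zmod_n]
    rintro rfl
    exact Nat.not_odd_iff_even.mpr even_two hl)

section RPAt

variable {K : Type*} [Field K]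

noncomputable def hookFactor (x : K) (s : Multiset ℤ) : K :=
  (s.map fun t => x ^ t + 1).prod

noncomputable def RPAt (x : K) (f : ℕ → ℕ) : K :=
  x ^ dP f * (∏ i ∈ Icc 1 (wtP f), (x ^ i + 1)) * (hookFactor x (hooksP f))⁻¹

theorem RP_eq_RPAt (l : ℕ) [Fact l.Prime] (q : ℤ) (f : ℕ → ℕ) :
    RP l q f = RPAt ((-q : ℤ) : ZMod l) f :=
  rfl

variable {x : K}

theorem hookFactor_cons (t : ℤ) (s : Multiset ℤ) :
    hookFactor x (t ::ₘ s) = (x ^ t + 1) * hookFactor x s := by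
  rw [hookFactor, Multiset.map_cons, Multiset.prod_cons, hookFactor]

theorem hookFactor_add (s t : Multiset ℤ) :
    hookFactor x (s + t) = hookFactor x s * hookFactor x t := by
  rw [hookFactor, Multiset.map_add, Multiset.prod_add, hookFactor, hookFactor]

theorem hookFactor_ne_zero (hx : ∀ t : ℤ, x ^ t + 1 ≠ 0) (s : Multiset ℤ) :
    hookFactor x s ≠ 0 :=
  Multiset.prod_ne_zero fun h0 => by
    obtain ⟨t, -, ht⟩ := Multiset.mem_map.mp h0
    exact hx t ht

theorem RPAt_addCell_mul {f : ℕ → ℕ} {a b : ℕ} (hx0 : x ≠ 0) (hx : ∀ t : ℤ, x ^ t + 1 ≠ 0)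
    (hf : IsPartition f) (h : IsAddableCorner f a b) :
    RPAt x (addCell f a) * (x * (x + 1) * hookFactor x ((rowColHooks f a b).map (· + 1))) =
      RPAt x f * x ^ a * (x ^ (wtP f + 1) + 1) * hookFactor x (rowColHooks f a b) := by
  have hhooks := congrArg (hookFactor x) (h.hooksP_addCell hf)
  rw [hookFactor_add, hookFactor_cons, hookFactor_add, zpow_one] at hhooks
  have hfa := hookFactor_ne_zero hx (hooksP (addCell f a))
  have hf0 := hookFactor_ne_zero hx (hooksP f)
  have hxa : x ^ (dP f + a - 1) = x ^ dP f * x ^ a / x := by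
    rw [zpow_sub_one₀ hx0, zpow_add₀ hx0, zpow_natCast, div_eq_mul_inv]
  rw [RPAt, RPAt, h.dP_addCell hf, hxa, wtP_addCell hf.finite_support,
    prod_Icc_succ_top (by omega)]
  field_simp
  linear_combination -(∏ i ∈ Icc 1 (wtP f), (x ^ i + 1)) * (x ^ (wtP f + 1) + 1) * hhooks

theorem RPAt_addCell_mul_of_eq_cons {m : ℕ → ℕ} {a b : ℕ} (hx0 : x ≠ 0)
    (hx : ∀ t : ℤ, x ^ t + 1 ≠ 0) (hm : IsPartition m) (h : IsAddableCorner m (a + 1) b)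
    {s : Multiset ℤ} {u v : ℤ} (hs : rowColHooks m (a + 1) b = u ::ₘ v ::ₘ s)
    (huv : x ^ (u + v + 1) = 1) :
    RPAt x (addCell m (a + 1)) * (x * (x + 1) * hookFactor x (s.map (· + 1))) =
      RPAt x m * x ^ a * (x ^ (wtP m + 1) + 1) * hookFactor x s := by
  have hcell := RPAt_addCell_mul hx0 hx hm h
  rw [hs, Multiset.map_cons, Multiset.map_cons, hookFactor_cons, hookFactor_cons,
    hookFactor_cons, hookFactor_cons, pow_succ] at hcell
  refine mul_right_cancel₀ (mul_ne_zero (mul_ne_zero hx0 (hx u)) (hx v)) ?_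
  linear_combination hcell - RPAt x (addCell m (a + 1)) * x * (x + 1) *
    hookFactor x (s.map (· + 1)) * zpow_add_one_mul_zpow_add_one hx0 huv

end RPAt

theorem R_mul_R_eq_of_add_corner_general
    (l : ℕ) [Fact l.Prime] (hlodd : Odd l) (q : ℤ)
    (e : ℕ) (he : e = orderOf ((-q : ℤ) : ZMod l)) (heo : Odd e)
    (f m : ℕ → ℕ) (hf : IsPartition f) (hm : IsPartition m)
    (hhook : AddsEHook e f m)
    (r c : ℕ) (hr : 1 ≤ r) (hc : 1 ≤ c)
    (hfr : f r = c - 1) (hfc : conjP f c = r - 1)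
    (hmr : m (r + 1) = c) (hmc : conjP m (c + 1) = r)
    (fbar mbar : ℕ → ℕ)
    (hfbar : ∀ i, fbar i = if i = r then f i + 1 else f i)
    (hmbar : ∀ i, mbar i = if i = r + 1 then m i + 1 else m i) :
    RP l q f * RP l q mbar = RP l q fbar * RP l q m := by
  obtain rfl : fbar = addCell f r := funext hfbar
  obtain rfl : mbar = addCell m (r + 1) := funext hmbar
  simp only [RP_eq_RPAt]
  set x : ZMod l := ((-q : ℤ) : ZMod l)
  have hodd : Odd (orderOf x) := he ▸ heo
  have hx0 := ne_zero_of_odd_orderOf hodd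
  have hx := zpow_add_one_ne_zero_of_odd_orderOf (ZMod.two_ne_zero_of_odd hlodd) hodd
  have hxe : x ^ e = 1 := he ▸ pow_orderOf_eq_one x
  have hcf : IsAddableCorner f r c := ⟨hr, hc, hfr, hfc⟩
  have hcm : IsAddableCorner m (r + 1) (c + 1) := ⟨by omega, by omega, hmr, hmc⟩
  obtain ⟨u, v, huv, hhooks⟩ := hhook.rowColHooks_eq hf hm hcf hmr hmc
  have hfbar := RPAt_addCell_mul hx0 hx hf hcf
  have hmbar := RPAt_addCell_mul_of_eq_cons hx0 hx hm hcm hhooks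
    (by rw [huv, zpow_natCast, hxe])
  rw [hhook.wtP_eq, add_right_comm, pow_add, hxe, mul_one] at hmbar
  have hK : x * (x + 1) * hookFactor x ((rowColHooks f r c).map (· + 1)) ≠ 0 :=
    mul_ne_zero (mul_ne_zero hx0 (by simpa using hx 1)) (hookFactor_ne_zero hx _)
  refine mul_right_cancel₀ hK ?_
  linear_combination RPAt x f * hmbar - RPAt x m * hfbar

/-- Let `l` be an odd prime, `q` an integer not divisible by `l`, with
the multiplicative order `e` of `-q` modulo `l` odd.  Let `λ ⊆ μ` be partitions with `μ`
obtained from `λ` by adding an `e`-hook, `(r,c)` an addable corner of `λ` with `(r,c)`,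
`(r+1,c)`, `(r,c+1)` in the diagram of `μ` and `(r+1,c+1)` an addable corner of `μ`.
If `λ̄` is `λ` with `(r,c)` added and `μ̄` is `μ` with `(r+1,c+1)` added, then
`R_λ · R_{μ̄} = R_{λ̄} · R_μ` in `ℤ/lℤ`. -/
theorem R_mul_R_eq_of_add_corner
    (l : ℕ) [Fact l.Prime] (hlodd : Odd l) (q : ℤ) (hq : ¬ (l : ℤ) ∣ q)
    (e : ℕ) (he : e = orderOf ((-q : ℤ) : ZMod l)) (heo : Odd e)
    (f m : ℕ → ℕ) (hf : IsPartition f) (hm : IsPartition m)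
    (hhook : AddsEHook e f m)
    (r c : ℕ) (hr : 1 ≤ r) (hc : 1 ≤ c)
    (hfr : f r = c - 1) (hfc : conjP f c = r - 1)
    (hm1 : InDiagram m (r, c)) (hm2 : InDiagram m (r + 1, c)) (hm3 : InDiagram m (r, c + 1))
    (hmr : m (r + 1) = c) (hmc : conjP m (c + 1) = r)
    (fbar mbar : ℕ → ℕ)
    (hfbar : ∀ i, fbar i = if i = r then f i + 1 else f i)
    (hmbar : ∀ i, mbar i = if i = r + 1 then m i + 1 else m i) :
    RP l q f * RP l q mbar = RP l q fbar * RP l q m :=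
  R_mul_R_eq_of_add_corner_general l hlodd q e he heo f m hf hm hhook r c hr hc hfr hfc hmr hmc fbar
    mbar hfbar hmbar
end

section
/- Let l be an odd prime, let q be an integer not divisible by l, and suppose that the multiplicative order e of −q modulo l is odd. If the partitions λ and μ have the same e-core, i.e. they are connected by a finite sequence of partitions in which each term is obtained from the previous one by adding or removing an e-hook, then R_λ = R_μ in ℤ/lℤ. (That is, the value of P_λ(q²)/P_λ(−q) mod l depends only on the e-core of λ.) -/
open Finset

theorem finsum_eq_sum_Ioc_zero {M : Type*} [AddCommMonoid M] {h : ℕ → M} {n : ℕ}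
    (h0 : h 0 = 0) (hn : ∀ i, n < i → h i = 0) : ∑ᶠ i, h i = ∑ i ∈ Ioc 0 n, h i := by
  refine finsum_eq_sum_of_support_subset h fun i hi => ?_
  simp only [coe_Ioc, Set.mem_Ioc]
  by_contra hout
  rcases Nat.eq_zero_or_pos i with rfl | hpos
  · exact hi h0
  · exact hi (hn i (by omega))

theorem sum_Ioc_zero_two_mul_sub_one (m : ℕ) : ∑ i ∈ Ioc 0 m, (2 * (i : ℤ) - 1) = (m : ℤ) ^ 2 := by
  induction m with
  | zero => simp
  | succ m ih =>
    rw [sum_Ioc_succ_top (Nat.zero_le m), ih]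
    push_cast
    ring

theorem prod_zpow_eq_zpow_sum {ι G₀ : Type*} [CommGroupWithZero G₀] {y : G₀} (hy : y ≠ 0)
    (s : Finset ι) (t : ι → ℤ) : ∏ i ∈ s, y ^ t i = y ^ ∑ i ∈ s, t i := by
  induction s using Finset.cons_induction with
  | empty => simp
  | cons a s ha ih => rw [prod_cons, sum_cons, ih, zpow_add₀ hy]

theorem image_eq_insert_erase_of_shift {a b : ℕ → ℕ} {n r s : ℕ}
    (ha : Set.InjOn a (Ioc 0 n : Set ℕ)) (hr : 1 ≤ r) (hrs : r ≤ s) (hsn : s ≤ n)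
    (hout : ∀ i, i < r ∨ s < i → b i = a i) (hstep : ∀ i, r ≤ i → i < s → b (i + 1) = a i) :
    (Ioc 0 n).image b = insert (b r) (((Ioc 0 n).image a).erase (a s)) := by
  have hne : ∀ i, 0 < i → i ≤ n → i ≠ s → a i ≠ a s := fun i h0 hn his =>
    ha.ne (by simp; omega) (by simp; omega) his
  ext c
  simp only [mem_insert, mem_erase, mem_image, mem_Ioc]
  constructor
  · rintro ⟨i, hi, rfl⟩
    rcases lt_trichotomy i r with hir | rfl | hri
    · rw [hout i (Or.inl hir)]
      exact Or.inr ⟨hne i hi.1 hi.2 (by omega), i, hi, rfl⟩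
    · exact Or.inl rfl
    · by_cases his : i ≤ s
      · obtain ⟨i, rfl⟩ : ∃ i', i = i' + 1 := ⟨i - 1, by omega⟩
        rw [hstep i (by omega) (by omega)]
        exact Or.inr ⟨hne i (by omega) (by omega) (by omega), i, ⟨by omega, by omega⟩, rfl⟩
      · rw [hout i (Or.inr (by omega))]
        exact Or.inr ⟨hne i hi.1 hi.2 (by omega), i, hi, rfl⟩
  · rintro (rfl | ⟨hc, i, hi, rfl⟩)
    · exact ⟨r, ⟨by omega, by omega⟩, rfl⟩
    · have his : i ≠ s := by rintro rfl; exact hc rfl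
      by_cases hmid : r ≤ i ∧ i < s
      · exact ⟨i + 1, ⟨by omega, by omega⟩, hstep i hmid.1 hmid.2⟩
      · exact ⟨i, hi, hout i (by omega)⟩

section Products

variable {M : Type*} [CommMonoid M]

theorem prod_Ioc_add_one (h : ℕ → M) (a b : ℕ) :
    ∏ i ∈ Ioc (a + 1) (b + 1), h i = ∏ i ∈ Ioc a b, h (i + 1) := by
  rw [← map_add_right_Ioc, prod_map]
  rfl

theorem prod_Ioc_zero_succ (h : ℕ → M) (n : ℕ) :
    ∏ i ∈ Ioc 0 (n + 1), h i = h 1 * ∏ i ∈ Ioc 0 n, h (i + 1) := by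
  rw [← prod_Ioc_consecutive h (Nat.zero_le 1) (by omega : 1 ≤ n + 1), prod_Ioc_add_one,
    Nat.Ioc_succ_singleton, prod_singleton]

theorem prod_Ioc_zero_eq_mul_of_injOn {F : ℕ → M} {s t : Finset ℕ} {u v : ℕ → ℕ} {N : ℕ}
    (hu : Set.InjOn u s) (hv : Set.InjOn v t) (hdisj : ∀ a ∈ s, ∀ b ∈ t, u a ≠ v b)
    (hus : ∀ a ∈ s, u a ∈ Ioc 0 N) (hvt : ∀ b ∈ t, v b ∈ Ioc 0 N) (hcard : #s + #t = N) :
    ∏ k ∈ Ioc 0 N, F k = (∏ a ∈ s, F (u a)) * ∏ b ∈ t, F (v b) := by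
  have hdisj' : Disjoint (s.image u) (t.image v) := by
    simp only [disjoint_left, mem_image]
    rintro _ ⟨a, ha, rfl⟩ ⟨b, hb, hab⟩
    exact hdisj a ha b hb hab.symm
  have hunion : s.image u ∪ t.image v = Ioc 0 N := by
    refine eq_of_subset_of_card_le
      (union_subset (image_subset_iff.2 hus) (image_subset_iff.2 hvt)) ?_
    rw [card_union_of_disjoint hdisj', card_image_of_injOn hu, card_image_of_injOn hv, hcard]
    simp
  rw [← hunion, prod_union hdisj', prod_image hu, prod_image hv]

theorem prod_Ioc_zero_add_of_periodic {F : ℤ → M} {e : ℕ} (hF : Function.Periodic F e)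
    (m : ℕ) :
    ∏ k ∈ Ioc 0 (m + e), F k = (∏ k ∈ Ioc 0 m, F k) * ∏ k ∈ Ioc 0 e, F k := by
  induction m with
  | zero => simp
  | succ m ih =>
    have hshift : F ((m + e + 1 : ℕ) : ℤ) = F ((m + 1 : ℕ) : ℤ) := by
      rw [show ((m + e + 1 : ℕ) : ℤ) = ((m + 1 : ℕ) : ℤ) + e by push_cast; ring, hF]
    rw [show m + 1 + e = m + e + 1 by omega, prod_Ioc_succ_top (by omega), ih, hshift,
      prod_Ioc_succ_top (by omega), mul_right_comm]

def pairProd (G : ℤ → M) (S : Finset ℕ) : M :=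
  ∏ a ∈ S, ∏ c ∈ S with c < a, G ((a : ℤ) - c)

theorem pairProd_insert {G : ℤ → M} (hG : Function.Even G) {S : Finset ℕ} {b : ℕ}
    (hb : b ∉ S) : pairProd G (insert b S) = pairProd G S * ∏ c ∈ S, G ((b : ℤ) - c) := by
  have hrow : ∀ a ∈ S, ∏ c ∈ insert b S with c < a, G ((a : ℤ) - c)
      = (∏ c ∈ S with c < a, G ((a : ℤ) - c)) * if b < a then G ((b : ℤ) - a) else 1 := by
    intro a _
    rw [filter_insert]
    split_ifs with hba
    · rw [prod_insert fun h => hb (mem_filter.1 h).1, mul_comm, ← hG, neg_sub]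
    · rw [mul_one]
  have hsplit : ∏ c ∈ S, G ((b : ℤ) - c)
      = (∏ c ∈ S with c < b, G ((b : ℤ) - c)) * ∏ c ∈ S with b < c, G ((b : ℤ) - c) := by
    rw [← prod_filter_mul_prod_filter_not S (· < b)]
    congr 1
    refine prod_congr (filter_congr fun c hc => ?_) fun _ _ => rfl
    have : c ≠ b := ne_of_mem_of_not_mem hc hb
    omega
  rw [pairProd, pairProd, prod_insert hb, filter_insert, if_neg (lt_irrefl b),
    prod_congr rfl hrow, prod_mul_distrib, ← prod_filter, hsplit, mul_left_comm]

theorem pairProd_insert_add_erase {G : ℤ → M} (hG : Function.Even G) {e : ℕ}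
    (hGe : Function.Periodic G e) {S : Finset ℕ} {b : ℕ} (hb : b ∈ S) (hbe : b + e ∉ S) :
    pairProd G (insert (b + e) (S.erase b)) = pairProd G S := by
  conv_rhs => rw [← insert_erase hb]
  rw [pairProd_insert hG (fun h => hbe (mem_of_mem_erase h)),
    pairProd_insert hG (notMem_erase b S)]
  congr 1
  refine prod_congr rfl fun c _ => ?_
  push_cast
  rw [add_sub_right_comm, hGe]

theorem prod_prod_Ioc_eq_pairProd (G : ℤ → M) {b : ℕ → ℕ} {n : ℕ}
    (hb : StrictAntiOn b (Ioc 0 n : Set ℕ)) :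
    ∏ i ∈ Ioc 0 n, ∏ j ∈ Ioc i n, G ((b i : ℤ) - b j) = pairProd G ((Ioc 0 n).image b) := by
  rw [pairProd, prod_image hb.injOn]
  refine prod_congr rfl fun i hi => ?_
  have hi' := mem_Ioc.1 hi
  have hbelow : {c ∈ (Ioc 0 n).image b | c < b i} = (Ioc i n).image b := by
    ext c
    simp only [mem_filter, mem_image, mem_Ioc]
    constructor
    · rintro ⟨⟨j, hj, rfl⟩, hlt⟩
      refine ⟨j, ⟨?_, hj.2⟩, rfl⟩
      by_contra hji
      exact absurd (hb.antitoneOn (by simp; omega) (by simp; omega) (not_lt.1 hji)) (not_le.2 hlt)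
    · rintro ⟨j, hj, rfl⟩
      exact ⟨⟨j, ⟨by omega, hj.2⟩, rfl⟩, hb (by simp; omega) (by simp; omega) hj.1⟩
  rw [hbelow, prod_image (hb.injOn.mono (by simpa using Set.Ioc_subset_Ioc_left hi'.1.le))]

end Products

section Partitions

variable {f : ℕ → ℕ} {n : ℕ}

def VanishesAbove (f : ℕ → ℕ) (n : ℕ) : Prop := ∀ i, n < i → f i = 0

theorem IsPartition.exists_vanishesAbove (hf : IsPartition f) : ∃ n, VanishesAbove f n :=
  let ⟨N, hN⟩ := hf.2.2
  ⟨N, fun i hi => hN i hi.le⟩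

theorem IsPartition.antitoneOn (hf : IsPartition f) : AntitoneOn f (Set.Ici 1) := by
  intro a ha b _ hab
  induction b, hab using Nat.le_induction with
  | base => exact le_rfl
  | succ b hab ih => exact (hf.2.1 b (le_trans ha hab)).trans (ih (le_trans ha hab))

theorem IsPartition.apply_le_apply_one (hf : IsPartition f) {i : ℕ} (hi : 1 ≤ i) :
    f i ≤ f 1 :=
  hf.antitoneOn Set.self_mem_Ici hi hi

theorem conjP_eq_card (hb : VanishesAbove f n) {j : ℕ} (hj : 1 ≤ j) :
    conjP f j = #{i ∈ Ioc 0 n | j ≤ f i} := by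
  rw [conjP, ← Set.ncard_coe_finset]
  congr 1
  ext i
  simp only [Set.mem_ofPred_eq, coe_filter, mem_Ioc]
  constructor
  · rintro ⟨hi, hji⟩
    refine ⟨⟨hi, ?_⟩, hji⟩
    by_contra hin
    rw [hb i (by omega)] at hji
    omega
  · rintro ⟨⟨hi, _⟩, hji⟩
    exact ⟨hi, hji⟩

theorem conjP_zero (f : ℕ → ℕ) : conjP f 0 = 0 := by
  rw [conjP]
  convert Set.Infinite.ncard (Set.Ici_infinite 1)
  ext i
  simp [Set.mem_Ici]

theorem conjP_le (hb : VanishesAbove f n) {j : ℕ} (hj : 1 ≤ j) : conjP f j ≤ n := by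
  rw [conjP_eq_card hb hj]
  exact (card_filter_le _ _).trans (by simp)

theorem conjP_antitoneOn (hb : VanishesAbove f n) : AntitoneOn (conjP f) (Set.Ici 1) := by
  intro j hj j' _ hjj
  rw [conjP_eq_card hb hj, conjP_eq_card hb (le_trans hj hjj)]
  exact card_le_card fun i hi => by
    simp only [mem_filter] at hi ⊢
    exact ⟨hi.1, by omega⟩

theorem IsPartition.le_conjP_iff_s19 (hf : IsPartition f) (hb : VanishesAbove f n) {i j : ℕ}
    (hi : 1 ≤ i) (hj : 1 ≤ j) : i ≤ conjP f j ↔ j ≤ f i := by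
  rw [conjP_eq_card hb hj]
  constructor
  · intro hle
    by_contra! hlt
    have hsub : {k ∈ Ioc 0 n | j ≤ f k} ⊆ Ioc 0 (i - 1) := fun k hk => by
      simp only [mem_filter, mem_Ioc] at hk ⊢
      by_contra hki
      have := hf.antitoneOn hi hk.1.1 (by omega : i ≤ k)
      omega
    have := card_le_card hsub
    simp only [Nat.card_Ioc] at this
    omega
  · intro hji
    have hin : i ≤ n := by
      by_contra hin
      rw [hb i (by omega)] at hji
      omega
    have hsub : Ioc 0 i ⊆ {k ∈ Ioc 0 n | j ≤ f k} := fun k hk => by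
      simp only [mem_filter, mem_Ioc] at hk ⊢
      exact ⟨⟨hk.1, by omega⟩, hji.trans (hf.antitoneOn (by omega : 1 ≤ k) hi hk.2)⟩
    simpa using card_le_card hsub

theorem IsPartition.conjP_eq_zero_s19 (hf : IsPartition f) (hb : VanishesAbove f n) {j : ℕ}
    (hj : f 1 < j) : conjP f j = 0 := by
  have := (hf.le_conjP_iff_s19 hb le_rfl (by omega : 1 ≤ j)).not.2 (by omega)
  omega

theorem IsPartition.eq_zero_of_conjP_lt (hf : IsPartition f) (hb : VanishesAbove f n)
    {i : ℕ} (hi : conjP f 1 < i) : f i = 0 := by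
  have := (hf.le_conjP_iff_s19 hb (by omega : 1 ≤ i) le_rfl).not.1 (by omega)
  omega

theorem IsPartition.wtP_eq_sum (hf : IsPartition f) (hb : VanishesAbove f n) :
    wtP f = ∑ i ∈ Ioc 0 n, f i :=
  finsum_eq_sum_Ioc_zero hf.1 hb

theorem IsPartition.sum_conjP_sq (hf : IsPartition f) (hb : VanishesAbove f n) :
    ∑ j ∈ Ioc 0 (f 1), (conjP f j : ℤ) ^ 2 = ∑ i ∈ Ioc 0 n, (2 * (i : ℤ) - 1) * f i := by
  simp_rw [← sum_Ioc_zero_two_mul_sub_one]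
  rw [sum_comm' (s' := fun i => Ioc 0 (f i)) (t' := Ioc 0 n)]
  · simp only [sum_const, Nat.card_Ioc, Nat.sub_zero, nsmul_eq_mul, mul_comm]
  intro j i
  simp only [mem_Ioc]
  constructor
  · rintro ⟨⟨hj, hjf⟩, hi, hic⟩
    have := (hf.le_conjP_iff_s19 hb hi hj).1 hic
    exact ⟨⟨hj, this⟩, hi, hic.trans (conjP_le hb hj)⟩
  · rintro ⟨⟨hj, hjf⟩, hi, hin⟩
    exact ⟨⟨hj, hjf.trans (hf.apply_le_apply_one hi)⟩, hi, (hf.le_conjP_iff_s19 hb hi hj).2 hjf⟩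

theorem IsPartition.dP_eq_sum (hf : IsPartition f) (hb : VanishesAbove f n) :
    dP f = ∑ i ∈ Ioc 0 n, ((i : ℤ) - 1) * f i := by
  have hconj : ∑ᶠ j, (conjP f j : ℤ) ^ 2 = ∑ j ∈ Ioc 0 (f 1), (conjP f j : ℤ) ^ 2 :=
    finsum_eq_sum_Ioc_zero (by simp [conjP_zero]) fun j hj => by
      simp [hf.conjP_eq_zero_s19 hb hj]
  have hrows : ∑ᶠ i : ℕ, (i : ℤ) * f i = ∑ i ∈ Ioc 0 n, (i : ℤ) * f i :=
    finsum_eq_sum_Ioc_zero (by simp) fun i hi => by simp [hb i hi]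
  rw [dP, hconj, hrows, hf.sum_conjP_sq hb, ← sum_sub_distrib]
  exact sum_congr rfl fun i _ => by ring

end Partitions

section BetaNumbers

variable {M : Type*} [CommMonoid M] {f : ℕ → ℕ} {n : ℕ}

def betaNum (f : ℕ → ℕ) (n i : ℕ) : ℕ := f i + (n - i)

theorem IsPartition.betaNum_strictAntiOn (hf : IsPartition f) :
    StrictAntiOn (betaNum f n) (Ioc 0 n : Set ℕ) := by
  intro i hi j hj hij
  simp only [coe_Ioc, Set.mem_Ioc] at hi hj
  have := hf.antitoneOn (by omega : 1 ≤ i) (by omega : 1 ≤ j) hij.le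
  simp only [betaNum]
  omega

def betaSet (f : ℕ → ℕ) (n : ℕ) : Finset ℕ := (Ioc 0 n).image (betaNum f n)

theorem IsPartition.two_mul_dP_add_sum_betaNum_sub (hf : IsPartition f) (hb : VanishesAbove f n) :
    2 * dP f + ∑ i ∈ Ioc 0 n, ∑ j ∈ Ioc i n, ((betaNum f n i : ℤ) - betaNum f n j)
      = (n - 1) * wtP f + ∑ i ∈ Ioc 0 n, ∑ j ∈ Ioc i n, ((j : ℤ) - i) := by
  have hdiff : ∀ i ∈ Ioc 0 n, ∑ j ∈ Ioc i n, ((betaNum f n i : ℤ) - betaNum f n j)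
      = (n - i) * f i - ∑ j ∈ Ioc i n, (f j : ℤ) + ∑ j ∈ Ioc i n, ((j : ℤ) - i) := by
    intro i hi
    have hterm : ∀ j ∈ Ioc i n, ((betaNum f n i : ℤ) - betaNum f n j)
        = f i - f j + ((j : ℤ) - i) := fun j hj => by
      simp only [betaNum, mem_Ioc] at hi hj ⊢
      omega
    rw [sum_congr rfl hterm, sum_add_distrib, sum_sub_distrib, sum_const, Nat.card_Ioc,
      nsmul_eq_mul, Nat.cast_sub (mem_Ioc.1 hi).2]
  have hlower : ∑ i ∈ Ioc 0 n, ∑ j ∈ Ioc i n, (f j : ℤ)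
      = ∑ j ∈ Ioc 0 n, ((j : ℤ) - 1) * f j := by
    rw [sum_comm' (s' := fun j => Ioc 0 (j - 1)) (t' := Ioc 0 n)]
    · refine sum_congr rfl fun j hj => ?_
      rw [sum_const, Nat.card_Ioc, Nat.sub_zero, nsmul_eq_mul,
        Nat.cast_pred (by rw [mem_Ioc] at hj; omega)]
    · intro i j
      simp only [mem_Ioc]
      omega
  rw [sum_congr rfl hdiff, sum_add_distrib, sum_sub_distrib, hlower, hf.dP_eq_sum hb,
    hf.wtP_eq_sum hb, Nat.cast_sum, mul_sum, mul_sum,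
    ← sum_congr rfl fun (i : ℕ) _ => (by ring : 2 * (((i : ℤ) - 1) * f i) + (n - i) * f i
      - (i - 1) * f i = (n - 1) * f i), sum_sub_distrib, sum_add_distrib]
  ring

noncomputable def hookLength (f : ℕ → ℕ) (i j : ℕ) : ℤ := (f i : ℤ) - j + conjP f j - i + 1

theorem IsPartition.prod_map_hooksP (F : ℤ → M) (hf : IsPartition f)
    (hb : VanishesAbove f n) :
    ((hooksP f).map F).prod = ∏ i ∈ Ioc 0 n, ∏ j ∈ Ioc 0 (f i), F (hookLength f i j) := by
  have hcells : ((hooksP f).map F).prod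
      = ∏ i ∈ Ioc 0 (conjP f 1), ∏ j ∈ Icc 1 (f 1),
          if j ≤ f i then F (hookLength f i j) else 1 := by
    have hIcc : Icc 1 (conjP f 1) = Ioc 0 (conjP f 1) := by ext; simp; omega
    rw [hooksP, Multiset.map_map, ← prod_eq_multiset_prod, prod_filter, prod_product, hIcc]
    rfl
  have hrow : ∀ i ∈ Ioc 0 (conjP f 1), (∏ j ∈ Icc 1 (f 1),
      if j ≤ f i then F (hookLength f i j) else 1)
      = ∏ j ∈ Ioc 0 (f i), F (hookLength f i j) := by
    intro i hi
    rw [← prod_filter]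
    refine prod_congr (ext fun j => ?_) fun _ _ => rfl
    have := hf.apply_le_apply_one (mem_Ioc.1 hi).1
    simp only [mem_filter, mem_Icc, mem_Ioc]
    omega
  rw [hcells, prod_congr rfl hrow]
  refine prod_subset (Ioc_subset_Ioc_right (conjP_le hb le_rfl)) fun i hi hout => ?_
  simp only [mem_Ioc, not_and, not_le] at hi hout
  simp [hf.eq_zero_of_conjP_lt hb (hout hi.1)]

def removeFirstRow (f : ℕ → ℕ) (i : ℕ) : ℕ := if i = 0 then 0 else f (i + 1)

theorem isPartition_removeFirstRow (hf : IsPartition f) : IsPartition (removeFirstRow f) := by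
  obtain ⟨N, hN⟩ := hf.2.2
  refine ⟨rfl, fun i hi => ?_, N, fun i hi => ?_⟩
  · simp only [removeFirstRow, if_neg (by omega : i + 1 ≠ 0), if_neg (by omega : i ≠ 0)]
    exact hf.2.1 (i + 1) (by omega)
  · simp only [removeFirstRow]
    split_ifs
    · rfl
    · exact hN (i + 1) (by omega)

theorem vanishesAbove_removeFirstRow (hb : VanishesAbove f (n + 1)) :
    VanishesAbove (removeFirstRow f) n := fun i hi => by
  simp only [removeFirstRow, if_neg (by omega : i ≠ 0)]
  exact hb (i + 1) (by omega)

theorem IsPartition.conjP_eq_conjP_removeFirstRow_add_one (hf : IsPartition f)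
    (hb : VanishesAbove f (n + 1)) {j : ℕ} (hj : 1 ≤ j) (hjf : j ≤ f 1) :
    conjP f j = conjP (removeFirstRow f) j + 1 := by
  have hshift : ∀ i, 1 ≤ i → (i ≤ conjP (removeFirstRow f) j ↔ i + 1 ≤ conjP f j) :=
    fun i hi => by
      rw [(isPartition_removeFirstRow hf).le_conjP_iff_s19 (vanishesAbove_removeFirstRow hb) hi hj,
        hf.le_conjP_iff_s19 hb (by omega) hj, removeFirstRow, if_neg (by omega)]
  have hpos := (hf.le_conjP_iff_s19 hb le_rfl hj).2 hjf
  have hle : conjP f j ≤ conjP (removeFirstRow f) j + 1 := by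
    by_cases h : 2 ≤ conjP f j
    · have := (hshift (conjP f j - 1) (by omega)).2 (by omega)
      omega
    · omega
  have hge : conjP (removeFirstRow f) j + 1 ≤ conjP f j := by
    rcases Nat.eq_zero_or_pos (conjP (removeFirstRow f) j) with h | h
    · omega
    · exact (hshift _ h).1 le_rfl
  omega

theorem IsPartition.hookLength_one_ne_betaNum_sub (hf : IsPartition f)
    (hb : VanishesAbove f n) {j k : ℕ} (hj : 1 ≤ j) (hk : 1 ≤ k) (hkn : k ≤ n) :
    hookLength f 1 j ≠ (betaNum f n 1 : ℤ) - betaNum f n k := by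
  have := hf.apply_le_apply_one hk
  have hiff := hf.le_conjP_iff_s19 hb hk hj
  simp only [hookLength, betaNum]
  by_cases hjk : j ≤ f k
  · have := hiff.2 hjk
    omega
  · have := hiff.not.2 hjk
    omega

/-- The hook lengths in the first row and the differences `β₁ - βₖ` (`1 < k`) partition
`{1, …, β₁}`. -/
theorem IsPartition.prod_hookLength_one_mul (F : ℤ → M) (hf : IsPartition f)
    (hb : VanishesAbove f (n + 1)) :
    (∏ j ∈ Ioc 0 (f 1), F (hookLength f 1 j)) *
      ∏ k ∈ Ioc 1 (n + 1), F ((betaNum f (n + 1) 1 : ℤ) - betaNum f (n + 1) k)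
    = ∏ k ∈ Ioc 0 (f 1 + n), F k := by
  have hconj : ∀ j ∈ Ioc 0 (f 1), 1 ≤ conjP f j ∧ conjP f j ≤ n + 1 := fun j hj => by
    rw [mem_Ioc] at hj
    exact ⟨(hf.le_conjP_iff_s19 hb le_rfl (by omega)).2 hj.2, conjP_le hb (by omega)⟩
  have hrow : ∀ k ∈ Ioc 1 (n + 1), f k ≤ f 1 := fun k hk =>
    hf.apply_le_apply_one (by rw [mem_Ioc] at hk; omega)
  have hu : ∀ j ∈ Ioc 0 (f 1), ((f 1 - j + conjP f j : ℕ) : ℤ) = hookLength f 1 j :=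
    fun j hj => by
      have := hconj j hj
      rw [mem_Ioc] at hj
      simp only [hookLength]
      omega
  have hv : ∀ k ∈ Ioc 1 (n + 1),
      ((f 1 - f k + (k - 1) : ℕ) : ℤ) = (betaNum f (n + 1) 1 : ℤ) - betaNum f (n + 1) k :=
    fun k hk => by
      have := hrow k hk
      rw [mem_Ioc] at hk
      simp only [betaNum]
      omega
  have hu_anti : StrictAntiOn (fun j => f 1 - j + conjP f j) (Ioc 0 (f 1) : Set ℕ) := by
    intro j hj j' hj' hjj
    simp only [coe_Ioc, Set.mem_Ioc] at hj hj'
    have := conjP_antitoneOn hb (by omega : 1 ≤ j) (by omega : 1 ≤ j') hjj.le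
    dsimp only
    omega
  have hv_mono : StrictMonoOn (fun k => f 1 - f k + (k - 1)) (Ioc 1 (n + 1) : Set ℕ) := by
    intro k hk k' hk' hkk
    simp only [coe_Ioc, Set.mem_Ioc] at hk hk'
    have := hf.antitoneOn (by omega : 1 ≤ k) (by omega : 1 ≤ k') hkk.le
    dsimp only
    omega
  have hdisj : ∀ j ∈ Ioc 0 (f 1), ∀ k ∈ Ioc 1 (n + 1),
      f 1 - j + conjP f j ≠ f 1 - f k + (k - 1) := fun j hj k hk heq => by
    have hne := hv k hk ▸ hu j hj ▸ congrArg (fun m : ℕ => (m : ℤ)) heq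
    rw [mem_Ioc] at hj hk
    exact hf.hookLength_one_ne_betaNum_sub hb hj.1 (by omega) hk.2 hne
  rw [prod_Ioc_zero_eq_mul_of_injOn (N := f 1 + n) hu_anti.injOn hv_mono.injOn hdisj
    (fun j hj => by have := hconj j hj; simp only [mem_Ioc] at hj ⊢; omega)
    (fun k hk => by have := hrow k hk; simp only [mem_Ioc] at hk ⊢; omega) (by simp),
    prod_congr rfl fun j hj => congrArg F (hu j hj),
    prod_congr rfl fun k hk => congrArg F (hv k hk)]

theorem IsPartition.hook_identity (F : ℤ → M) (hf : IsPartition f) (hb : VanishesAbove f n) :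
    (∏ i ∈ Ioc 0 n, ∏ j ∈ Ioc 0 (f i), F (hookLength f i j)) *
      ∏ i ∈ Ioc 0 n, ∏ j ∈ Ioc i n, F ((betaNum f n i : ℤ) - betaNum f n j)
    = ∏ i ∈ Ioc 0 n, ∏ k ∈ Ioc 0 (betaNum f n i), F k := by
  induction n generalizing f with
  | zero => simp
  | succ n ih =>
    set f' := removeFirstRow f
    have hrow : ∀ i ∈ Ioc 0 n, f (i + 1) = f' i := fun i hi => by
      have : i ≠ 0 := by rw [mem_Ioc] at hi; omega
      simp only [f', removeFirstRow, if_neg this]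
    have hbeta : ∀ i ∈ Ioc 0 n, betaNum f (n + 1) (i + 1) = betaNum f' n i := fun i hi => by
      have := hrow i hi
      rw [mem_Ioc] at hi
      simp only [betaNum]
      omega
    have hhooks : ∀ i ∈ Ioc 0 n, ∏ j ∈ Ioc 0 (f (i + 1)), F (hookLength f (i + 1) j)
        = ∏ j ∈ Ioc 0 (f' i), F (hookLength f' i j) := fun i hi => by
      rw [hrow i hi]
      refine prod_congr rfl fun j hj => congrArg F ?_
      rw [mem_Ioc] at hj
      have := hf.conjP_eq_conjP_removeFirstRow_add_one hb (by omega)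
        (hj.2.trans (hrow i hi ▸ hf.apply_le_apply_one (by omega)))
      simp only [hookLength, this, hrow i hi]
      push_cast
      ring
    have hdiffs : ∀ i ∈ Ioc 0 n, ∏ j ∈ Ioc (i + 1) (n + 1),
          F ((betaNum f (n + 1) (i + 1) : ℤ) - betaNum f (n + 1) j)
        = ∏ j ∈ Ioc i n, F ((betaNum f' n i : ℤ) - betaNum f' n j) := fun i hi => by
      rw [prod_Ioc_add_one]
      refine prod_congr rfl fun j hj => ?_
      rw [hbeta i hi, hbeta j (by rw [mem_Ioc] at hi hj ⊢; omega)]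
    have hfacts : ∀ i ∈ Ioc 0 n, ∏ k ∈ Ioc 0 (betaNum f (n + 1) (i + 1)), F k
        = ∏ k ∈ Ioc 0 (betaNum f' n i), F k := fun i hi => by
      rw [hbeta i hi]
    rw [prod_Ioc_zero_succ, prod_Ioc_zero_succ, prod_Ioc_zero_succ, prod_congr rfl hhooks,
      prod_congr rfl hdiffs, prod_congr rfl hfacts, mul_mul_mul_comm,
      ih (isPartition_removeFirstRow hf) (vanishesAbove_removeFirstRow hb),
      hf.prod_hookLength_one_mul F hb]
    simp [betaNum, f']

end BetaNumbers

section RimHooks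

variable {f g : ℕ → ℕ} {e n : ℕ}

theorem inDiagram_and_not_inDiagram_iff {i j : ℕ} :
    (InDiagram g (i, j) ∧ ¬ InDiagram f (i, j)) ↔ 1 ≤ i ∧ f i < j ∧ j ≤ g i := by
  simp only [InDiagram]
  omega

theorem exists_vertical_step_of_reflTransGen {S : ℕ × ℕ → Prop} {p q : ℕ × ℕ}
    (h : Relation.ReflTransGen (fun a b => S a ∧ S b ∧ AdjCell a b) p q) {i : ℕ}
    (hpi : p.1 ≤ i) (hiq : i < q.1) : ∃ j, S (i, j) ∧ S (i + 1, j) := by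
  induction h with
  | refl => omega
  | @tail b c _ hbc ih =>
    by_cases hib : i < b.1
    · exact ih hib
    obtain ⟨hb, hc, hadj⟩ := hbc
    obtain ⟨_, _⟩ | ⟨hcol, _⟩ := hadj
    · omega
    · have hbi : b = (i, b.2) := Prod.ext (by omega) rfl
      have hci : c = (i + 1, b.2) := Prod.ext (by omega) hcol.symm
      exact ⟨b.2, hbi ▸ hb, hci ▸ hc⟩

/-- Connectedness makes the rim hook pass from row `i` to row `i + 1` inside one column, and
the absence of `2 × 2` squares forbids any further overlap. -/
theorem AddsEHook.apply_succ_eq_s19 (hf : IsPartition f) (hg : IsPartition g)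
    (hA : AddsEHook e f g) {r s : ℕ} (hr : 1 ≤ r) (hfr : f r < g r) (hfs : f s < g s)
    {i : ℕ} (hri : r ≤ i) (his : i < s) : g (i + 1) = f i + 1 := by
  obtain ⟨-, -, hconn, hsquare⟩ := hA
  have hskew : ∀ {i j : ℕ}, 1 ≤ i → f i < j → j ≤ g i →
      InDiagram g (i, j) ∧ ¬ InDiagram f (i, j) := fun h1 h2 h3 =>
    inDiagram_and_not_inDiagram_iff.2 ⟨h1, h2, h3⟩
  obtain ⟨j, hj, hj'⟩ := exists_vertical_step_of_reflTransGen
    (hconn _ _ (hskew hr (Nat.lt_succ_self _) hfr) (hskew (by omega) (Nat.lt_succ_self _) hfs))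
    (i := i) hri his
  rw [inDiagram_and_not_inDiagram_iff] at hj hj'
  have hg' := hg.2.1 i (by omega)
  have hf' := hf.2.1 i (by omega)
  by_contra hne
  exact hsquare ⟨i, f i + 1, hskew (by omega) (by omega) (by omega),
    hskew (by omega) (by omega) (by omega), hskew (by omega) (by omega) (by omega),
    hskew (by omega) (by omega) (by omega)⟩

theorem sum_Ioc_sub_eq_of_rows {r s : ℕ} (hr : 1 ≤ r) (hrs : r ≤ s) (hsn : s ≤ n)
    (hout : ∀ i, i < r ∨ s < i → g i = f i) (hstep : ∀ i, r ≤ i → i < s → g (i + 1) = f i + 1) :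
    ∑ i ∈ Ioc 0 n, ((g i : ℤ) - f i) = g r - f s + (s - r) := by
  have htele : ∀ t, r ≤ t → t ≤ s → ∑ i ∈ Icc r t, ((g i : ℤ) - f i) = g r - f t + (t - r) := by
    intro t hrt hts
    induction t, hrt using Nat.le_induction with
    | base => simp
    | succ t hrt ih =>
      rw [sum_Icc_succ_top (by omega), ih (by omega), hstep t hrt (by omega)]
      push_cast
      ring
  rw [← htele s hrs le_rfl]
  symm
  refine sum_subset (fun i hi => ?_) fun i _ hi => ?_
  · simp only [mem_Icc, mem_Ioc] at hi ⊢
    omega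
  · rw [hout i (by simp only [mem_Icc] at hi; omega), sub_self]

theorem AddsEHook.exists_rows (he : 0 < e) (hf : IsPartition f) (hg : IsPartition g)
    (hA : AddsEHook e f g) (hbg : VanishesAbove g n) :
    ∃ r s, 1 ≤ r ∧ r ≤ s ∧ s ≤ n ∧ f r < g r ∧ (∀ i, i < r ∨ s < i → g i = f i) ∧
      (∀ i, r ≤ i → i < s → g (i + 1) = f i + 1) ∧ g r + s = f s + e + r := by
  have hle := hA.1
  have hbf : VanishesAbove f n := fun i hi => by have := hle i; have := hbg i hi; omega
  have hsum : ∑ i ∈ Ioc 0 n, ((g i : ℤ) - f i) = e := by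
    have := hA.2.1
    rw [hg.wtP_eq_sum hbg, hf.wtP_eq_sum hbf] at this
    rw [sum_sub_distrib, ← Nat.cast_sum, ← Nat.cast_sum, this]
    push_cast
    ring
  set S := {i ∈ Ioc 0 n | f i < g i}
  have hS : S.Nonempty := by
    by_contra hS
    rw [not_nonempty_iff_eq_empty, filter_eq_empty_iff] at hS
    have : ∑ i ∈ Ioc 0 n, ((g i : ℤ) - f i) = 0 :=
      sum_eq_zero fun i hi => by have := hS hi; have := hle i; omega
    omega
  obtain ⟨hr, hfr⟩ := mem_filter.1 (S.min'_mem hS)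
  obtain ⟨hs, hfs⟩ := mem_filter.1 (S.max'_mem hS)
  rw [mem_Ioc] at hr hs
  have hout : ∀ i, i < S.min' hS ∨ S.max' hS < i → g i = f i := by
    intro i hi
    by_contra hne
    have hmem : i ∈ S := by
      have := hle i
      have : i ≠ 0 := by rintro rfl; exact hne (hg.1.trans hf.1.symm)
      have : i ≤ n := by by_contra hin; exact hne ((hbg i (by omega)).trans (hbf i (by omega)).symm)
      exact mem_filter.2 ⟨mem_Ioc.2 ⟨by omega, by omega⟩, by omega⟩
    have := S.min'_le i hmem
    have := S.le_max' i hmem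
    omega
  have hstep : ∀ i, S.min' hS ≤ i → i < S.max' hS → g (i + 1) = f i + 1 :=
    fun i hri his => hA.apply_succ_eq_s19 hf hg hr.1 hfr hfs hri his
  have hrs := S.min'_le _ (S.max'_mem hS)
  have := sum_Ioc_sub_eq_of_rows hr.1 hrs hs.2 hout hstep
  exact ⟨S.min' hS, S.max' hS, hr.1, hrs, hs.2, hfr, hout, hstep, by omega⟩

theorem AddsEHook.betaSet_eq (he : 0 < e) (hf : IsPartition f) (hg : IsPartition g)
    (hA : AddsEHook e f g) (hbg : VanishesAbove g n) :
    ∃ b ∈ betaSet f n, b + e ∉ betaSet f n ∧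
      betaSet g n = insert (b + e) ((betaSet f n).erase b) := by
  obtain ⟨r, s, hr, hrs, hsn, hfr, hout, hstep, hrow⟩ := hA.exists_rows he hf hg hbg
  have hβr : betaNum g n r = betaNum f n s + e := by
    simp only [betaNum]
    omega
  have hnew : betaNum f n s + e ∉ betaSet f n := by
    simp only [betaSet, mem_image, not_exists, not_and]
    intro i hi heq
    have hi' := mem_Ioc.1 hi
    rcases lt_or_ge i r with hir | hri
    · have := hg.betaNum_strictAntiOn (n := n) (by simp; omega) (by simp; omega) hir
      simp only [betaNum, hout i (Or.inl hir)] at this heq hβr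
      omega
    · have := (hf.betaNum_strictAntiOn (n := n)).antitoneOn
        (by simp; omega) (by simp; omega) hri
      simp only [betaNum] at this heq hβr
      omega
  refine ⟨_, mem_image_of_mem _ (mem_Ioc.2 ⟨by omega, hsn⟩), hnew, ?_⟩
  rw [← hβr, betaSet, betaSet]
  refine image_eq_insert_erase_of_shift hf.betaNum_strictAntiOn.injOn hr hrs hsn
    (fun i hi => by simp only [betaNum, hout i hi]) fun i hri his => ?_
  simp only [betaNum, hstep i hri his]
  omega

end RimHooks

section HookQuotient

variable {K : Type*} [Field K]

theorem zpow_add_one_ne_zero {x : K} (hK : (-1 : K) ≠ 1) {e : ℕ} (he : Odd e)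
    (hxe : x ^ e = 1) (v : ℤ) : x ^ v + 1 ≠ 0 := by
  intro h0
  have hv : x ^ v = -1 := eq_neg_of_add_eq_zero_left h0
  have hcomm : (x ^ v) ^ (e : ℤ) = (x ^ (e : ℤ)) ^ v := by rw [← zpow_mul, ← zpow_mul, mul_comm]
  rw [hv, zpow_natCast, zpow_natCast, hxe, one_zpow, he.neg_one_pow] at hcomm
  exact hK hcomm

theorem exists_sq_eq_and_pow_eq_one {M : Type*} [Monoid M] {x : M} {e : ℕ} (he : Odd e)
    (hxe : x ^ e = 1) : ∃ y : M, y ^ 2 = x ∧ y ^ e = 1 := by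
  obtain ⟨k, rfl⟩ := he
  refine ⟨x ^ (k + 1), ?_, ?_⟩
  · rw [← pow_mul, show (k + 1) * 2 = 2 * k + 1 + 1 by ring, pow_succ, hxe, one_mul]
  · rw [← pow_mul, mul_comm, pow_mul, hxe, one_pow]

noncomputable def hookQuot (x : K) (f : ℕ → ℕ) : K :=
  x ^ dP f * (∏ i ∈ Icc 1 (wtP f), (x ^ i + 1)) *
    (((hooksP f).map (fun h => x ^ h + 1)).prod)⁻¹

variable {f g : ℕ → ℕ} {n : ℕ} {x y : K}

theorem IsPartition.prod_map_hooksP_inv (hf : IsPartition f) (hb : VanishesAbove f n)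
    (hy0 : y ≠ 0) (hy : y ^ 2 = x) (hF : ∀ v : ℤ, x ^ v + 1 ≠ 0) :
    ((hooksP f).map (fun h => x ^ h + 1)).prod⁻¹
      = y ^ (∑ i ∈ Ioc 0 n, ∑ j ∈ Ioc i n, ((betaNum f n i : ℤ) - betaNum f n j)) *
        pairProd (fun v => y ^ v + y ^ (-v)) (betaSet f n) *
        (∏ b ∈ betaSet f n, ∏ k ∈ Ioc 0 b, (x ^ (k : ℤ) + 1))⁻¹ := by
  have hsplit : ∀ v : ℤ, x ^ v + 1 = y ^ v * (y ^ v + y ^ (-v)) := fun v => by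
    rw [mul_add, ← zpow_add₀ hy0 v (-v), add_neg_cancel, zpow_zero, ← zpow_add₀ hy0, ← two_mul,
      zpow_mul, ← hy]
    norm_cast
  have hdiffs : ∏ i ∈ Ioc 0 n, ∏ j ∈ Ioc i n, (x ^ ((betaNum f n i : ℤ) - betaNum f n j) + 1)
      = y ^ (∑ i ∈ Ioc 0 n, ∑ j ∈ Ioc i n, ((betaNum f n i : ℤ) - betaNum f n j)) *
        pairProd (fun v => y ^ v + y ^ (-v)) (betaSet f n) := by
    simp_rw [hsplit, prod_mul_distrib, prod_zpow_eq_zpow_sum hy0]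
    rw [prod_prod_Ioc_eq_pairProd (fun v => y ^ v + y ^ (-v)) hf.betaNum_strictAntiOn]
    rfl
  have hD : ∏ i ∈ Ioc 0 n, ∏ j ∈ Ioc i n, (x ^ ((betaNum f n i : ℤ) - betaNum f n j) + 1) ≠ 0 :=
    prod_ne_zero_iff.2 fun i _ => prod_ne_zero_iff.2 fun j _ => hF _
  have hid := hf.hook_identity (fun v => x ^ v + 1) hb
  rw [hf.prod_map_hooksP _ hb, ← hdiffs, betaSet, prod_image hf.betaNum_strictAntiOn.injOn,
    ← hid, mul_inv_rev, mul_inv_cancel_left₀ hD]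

theorem IsPartition.hookQuot_eq (hf : IsPartition f) (hb : VanishesAbove f n) (hy0 : y ≠ 0)
    (hy : y ^ 2 = x) (hF : ∀ v : ℤ, x ^ v + 1 ≠ 0) :
    hookQuot x f = y ^ ((n - 1 : ℤ) * wtP f + ∑ i ∈ Ioc 0 n, ∑ j ∈ Ioc i n, ((j : ℤ) - i)) *
      ((∏ k ∈ Ioc 0 (wtP f), (x ^ (k : ℤ) + 1)) *
        pairProd (fun v => y ^ v + y ^ (-v)) (betaSet f n) *
        (∏ b ∈ betaSet f n, ∏ k ∈ Ioc 0 b, (x ^ (k : ℤ) + 1))⁻¹) := by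
  have hx : x ^ dP f = y ^ (2 * dP f) := by
    rw [zpow_mul, ← hy]
    norm_cast
  have hIcc : ∏ i ∈ Icc 1 (wtP f), (x ^ i + 1) = ∏ k ∈ Ioc 0 (wtP f), (x ^ (k : ℤ) + 1) := by
    refine prod_congr (ext fun k => ?_) fun k _ => by rw [zpow_natCast]
    simp only [mem_Icc, mem_Ioc]
    omega
  rw [hookQuot, hf.prod_map_hooksP_inv hb hy0 hy hF, ← hf.two_mul_dP_add_sum_betaNum_sub hb,
    zpow_add₀ hy0, hx, hIcc]
  ring

theorem hookQuot_eq_of_addsEHook {e : ℕ} (he : Odd e) (hxe : x ^ e = 1)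
    (hF : ∀ v : ℤ, x ^ v + 1 ≠ 0) (hf : IsPartition f) (hg : IsPartition g)
    (hA : AddsEHook e f g) : hookQuot x g = hookQuot x f := by
  obtain ⟨y, hy, hye⟩ := exists_sq_eq_and_pow_eq_one he hxe
  have hy0 : y ≠ 0 := by rintro rfl; simp [he.pos.ne'] at hye
  have hx0 : x ≠ 0 := by rintro rfl; simp [he.pos.ne'] at hxe
  obtain ⟨n, hbg⟩ := hg.exists_vanishesAbove
  have hbf : VanishesAbove f n := fun i hi => Nat.eq_zero_of_le_zero (hbg i hi ▸ hA.1 i)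
  obtain ⟨b, hb, hbe, hβ⟩ := hA.betaSet_eq he.pos hf hg hbg
  have hFper : Function.Periodic (fun v : ℤ => x ^ v + 1) e := fun v => by
    simp only [zpow_add₀ hx0, zpow_natCast, hxe, mul_one]
  have hGper : Function.Periodic (fun v : ℤ => y ^ v + y ^ (-v)) e := fun v => by
    simp only [neg_add, zpow_add₀ hy0, zpow_neg, zpow_natCast, hye, inv_one, mul_one]
  have hGeven : Function.Even (fun v : ℤ => y ^ v + y ^ (-v)) := fun v => by
    simp only [neg_neg, add_comm]
  have hPe : ∏ k ∈ Ioc 0 e, (x ^ (k : ℤ) + 1) ≠ 0 := prod_ne_zero_iff.2 fun k _ => hF k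
  have hyexp : ∀ c : ℤ, y ^ ((n - 1 : ℤ) * (wtP f + e : ℕ) + c) = y ^ ((n - 1 : ℤ) * wtP f + c) :=
    fun c => by
      rw [Nat.cast_add, mul_add, add_right_comm, zpow_add₀ hy0 (_ + c), mul_comm _ (e : ℤ),
        zpow_mul y (e : ℤ), zpow_natCast, hye, one_zpow, mul_one]
  rw [hg.hookQuot_eq hbg hy0 hy hF, hf.hookQuot_eq hbf hy0 hy hF, hA.2.1, hβ,
    pairProd_insert_add_erase hGeven hGper hb hbe,
    prod_insert fun h => hbe (mem_of_mem_erase h), prod_Ioc_zero_add_of_periodic hFper,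
    prod_Ioc_zero_add_of_periodic hFper, ← mul_prod_erase _ _ hb, hyexp]
  field_simp

end HookQuotient

theorem R_eq_of_same_e_core_general
    (l : ℕ) [Fact l.Prime] (hlodd : Odd l) (q : ℤ)
    (e : ℕ) (he : e = orderOf ((-q : ℤ) : ZMod l)) (heo : Odd e)
    (f m : ℕ → ℕ)
    (hcore : Relation.ReflTransGen
      (fun a b => IsPartition a ∧ IsPartition b ∧ (AddsEHook e a b ∨ AddsEHook e b a))
      f m) :
    RP l q f = RP l q m := by
  have hxe : ((-q : ℤ) : ZMod l) ^ e = 1 := he ▸ pow_orderOf_eq_one _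
  have hK : (-1 : ZMod l) ≠ 1 := Ring.neg_one_ne_one_of_char_ne_two <| by
    rw [ZMod.ringChar_zmod_n]
    rintro rfl
    exact Nat.not_odd_iff_even.2 even_two hlodd
  have hF := zpow_add_one_ne_zero hK heo hxe
  change hookQuot _ f = hookQuot _ m
  induction hcore with
  | refl => rfl
  | tail _ hstep ih =>
    obtain ⟨ha, hb, hab | hba⟩ := hstep
    · exact ih.trans (hookQuot_eq_of_addsEHook heo hxe hF ha hb hab).symm
    · exact ih.trans (hookQuot_eq_of_addsEHook heo hxe hF hb ha hba)

/-- Let `l` be an odd prime, `q` an integer not divisible by `l`, with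
the multiplicative order `e` of `-q` modulo `l` odd.  If the partitions `λ` and `μ` have
the same `e`-core, i.e. they are connected by a finite sequence of partitions in which
each term is obtained from the previous one by adding or removing an `e`-hook, then
`R_λ = R_μ` in `ℤ/lℤ`; that is, `P_λ(q²)/P_λ(−q) mod l` depends only on the `e`-core. -/
theorem R_eq_of_same_e_core
    (l : ℕ) [Fact l.Prime] (hlodd : Odd l) (q : ℤ) (hq : ¬ (l : ℤ) ∣ q)
    (e : ℕ) (he : e = orderOf ((-q : ℤ) : ZMod l)) (heo : Odd e)
    (f m : ℕ → ℕ) (hf : IsPartition f) (hm : IsPartition m)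
    (hcore : Relation.ReflTransGen
      (fun a b => IsPartition a ∧ IsPartition b ∧ (AddsEHook e a b ∨ AddsEHook e b a))
      f m) :
    RP l q f = RP l q m :=
  R_eq_of_same_e_core_general l hlodd q e he heo f m hcore
end
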